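/- arXiv:1103.0964 — 12 statements merged into one kernel-verified Lean document; each statement's English description precedes it below -/
import Mathlib

section
/- Let f_1,...,f_r : ℝ^n → ℝ be continuous. A continuous function φ : ℝ^n → ℝ lies in the set L^∞_loc(ℝ^n)·(f_1,...,f_r) = { ∑_i ψ_i f_i : ψ_i ∈ L^∞_loc } if and only if φ/(∑_i |f_i|) is locally bounded (interpreting the quotient as 0 where all f_i vanish and requiring φ to vanish on the common zero set). Equivalently, the set of such φ equals the principal ideal generated by ∑_i |f_i| over L^∞_loc. -/
/-!
If `φ = ∑ ψᵢ fᵢ` with `|ψᵢ| ≤ Cᵢ` near a point, then `|φ| ≤ (∑ Cᵢ) ∑ |fᵢ|` there, so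
`φ / ∑ |fᵢ|` is locally bounded. Conversely, writing `S = ∑ |fᵢ|` and using
`sign fᵢ * fᵢ = |fᵢ|`, one has `φ = ∑ (φ / S) sign fᵢ * fᵢ` wherever `S ≠ 0`, and the
coefficients `(φ / S) sign fᵢ` are dominated by `|φ / S|`.
-/

open Filter Topology

/-- A function `ψ` is locally bounded (in `L^∞_loc`). -/
def LocBdd {n : ℕ} (ψ : (Fin n → ℝ) → ℝ) : Prop :=
  ∀ x : Fin n → ℝ, ∃ C : ℝ, ∀ᶠ y in 𝓝 x, |ψ y| ≤ C

section Pointwise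

variable {α ι : Type*} [Field α] [LinearOrder α] [IsStrictOrderedRing α] [Fintype ι]

theorem abs_sum_mul_le_sum_mul_sum_abs {a b C : ι → α} (h : ∀ i, |a i| ≤ C i) :
    |∑ i, a i * b i| ≤ (∑ i, C i) * ∑ i, |b i| := by
  rw [Finset.sum_mul]
  refine (Finset.abs_sum_le_sum_abs _ _).trans (Finset.sum_le_sum fun i _ => ?_)
  rw [abs_mul]
  exact mul_le_mul (h i) (Finset.single_le_sum (fun j _ => abs_nonneg (b j))
    (Finset.mem_univ i)) (abs_nonneg _) ((abs_nonneg _).trans (h i))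

theorem abs_sum_mul_div_sum_abs_le {a b C : ι → α} (h : ∀ i, |a i| ≤ C i) :
    |(∑ i, a i * b i) / (∑ i, |b i|)| ≤ ∑ i, C i := by
  rcases (Finset.sum_nonneg fun i _ => abs_nonneg (b i)).eq_or_lt with hS | hS
  · rw [← hS, div_zero, abs_zero]
    exact Finset.sum_nonneg fun i _ => (abs_nonneg _).trans (h i)
  · rw [abs_div, abs_of_pos hS, div_le_iff₀ hS]
    exact abs_sum_mul_le_sum_mul_sum_abs h

theorem eq_sum_div_sum_abs_mul_sign_mul {a : α} {b : ι → α} (h : (∀ i, b i = 0) → a = 0) :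
    a = ∑ i, a / (∑ j, |b j|) * SignType.sign (b i) * b i := by
  simp_rw [mul_assoc, sign_mul_self, ← Finset.mul_sum]
  rcases eq_or_ne (∑ j, |b j|) 0 with hS | hS
  · rw [hS, div_zero, zero_mul]
    exact h fun i => abs_eq_zero.1 ((Finset.sum_eq_zero_iff_of_nonneg
      fun j _ => abs_nonneg (b j)).1 hS i (Finset.mem_univ i))
  · rw [div_mul_cancel₀ _ hS]

theorem abs_mul_sign_le (a b : α) : |a * SignType.sign b| ≤ |a| := by
  rw [abs_mul]
  refine mul_le_of_le_one_right (abs_nonneg a) ?_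
  rcases lt_trichotomy b 0 with hb | rfl | hb <;> simp [*]

end Pointwise

namespace LocBdd

variable {n : ℕ}

theorem of_abs_le {ψ χ : (Fin n → ℝ) → ℝ} (hψ : LocBdd ψ) (hle : ∀ x, |χ x| ≤ |ψ x|) :
    LocBdd χ := fun x =>
  let ⟨C, hC⟩ := hψ x
  ⟨C, hC.mono fun y hy => (hle y).trans hy⟩

theorem sum_mul_div_sum_abs {ι : Type*} [Fintype ι] {ψ : ι → (Fin n → ℝ) → ℝ}
    (hψ : ∀ i, LocBdd (ψ i)) (g : ι → (Fin n → ℝ) → ℝ) :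
    LocBdd fun x => (∑ i, ψ i x * g i x) / ∑ i, |g i x| := fun x => by
  choose C hC using fun i => hψ i x
  exact ⟨∑ i, C i, (eventually_all.2 hC).mono fun y => abs_sum_mul_div_sum_abs_le⟩

end LocBdd

theorem statement1_general (n r : ℕ) (f : Fin r → (Fin n → ℝ) → ℝ) (φ : (Fin n → ℝ) → ℝ) :
    (∃ ψ : Fin r → (Fin n → ℝ) → ℝ,
        (∀ i, LocBdd (ψ i)) ∧ ∀ x, φ x = ∑ i, ψ i x * f i x) ↔
    ((∀ x, (∀ i, f i x = 0) → φ x = 0) ∧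
      LocBdd (fun x => φ x / ∑ i, |f i x|)) := by
  constructor
  · rintro ⟨ψ, hψ, hφ⟩
    refine ⟨fun x hx => by simp [hφ, hx], ?_⟩
    simpa only [← hφ] using LocBdd.sum_mul_div_sum_abs hψ f
  · rintro ⟨hvanish, hbdd⟩
    exact ⟨fun i x => φ x / (∑ j, |f j x|) * SignType.sign (f i x),
      fun i => hbdd.of_abs_le fun x => abs_mul_sign_le _ _,
      fun x => eq_sum_div_sum_abs_mul_sign_mul (hvanish x)⟩

/-- A continuous `φ` can be written as `∑ i ψᵢ * f i` with the `ψᵢ` locally bounded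
iff `φ` vanishes on the common zero set of the `f i` and `φ / ∑ i |f i|` is locally
bounded (the quotient being interpreted as `0` where all the `f i` vanish). -/
theorem statement1 (n r : ℕ) (f : Fin r → (Fin n → ℝ) → ℝ) (φ : (Fin n → ℝ) → ℝ)
    (hf : ∀ i, Continuous (f i)) (hφ : Continuous φ) :
    (∃ ψ : Fin r → (Fin n → ℝ) → ℝ,
        (∀ i, LocBdd (ψ i)) ∧ ∀ x, φ x = ∑ i, ψ i x * f i x) ↔
    ((∀ x, (∀ i, f i x = 0) → φ x = 0) ∧
      LocBdd (fun x => φ x / ∑ i, |f i x|)) :=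
  statement1_general n r f φ
end

section
/- There do not exist continuous functions φ_1, φ_2, φ_3 : ℝ^3 → ℝ such that xyz = φ_1(x,y,z)·x² + φ_2(x,y,z)·y² + φ_3(x,y,z)·xyz² for all (x,y,z) ∈ ℝ^3. -/
/-!
Restricting to the lines `y = ± x` in the plane `z = c` and dividing by `x²`, continuity at
`x = 0` gives `φ₁ + φ₂ ± c² φ₃ = ± c` at `(0, 0, c)`, hence `c · φ₃ (0, 0, c) = 1` for every
`c ≠ 0`. The continuous function `c ↦ c · φ₃ (0, 0, c)` would then take the value `1` at `c = 0`.
-/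

def IsHochsterDecomposition (φ₁ φ₂ φ₃ : ℝ × ℝ × ℝ → ℝ) : Prop :=
  ∀ x y z : ℝ, x * y * z =
    φ₁ (x, y, z) * x ^ 2 + φ₂ (x, y, z) * y ^ 2 + φ₃ (x, y, z) * (x * y * z ^ 2)

namespace IsHochsterDecomposition

variable {φ₁ φ₂ φ₃ : ℝ × ℝ × ℝ → ℝ}

theorem diagonal_eq (h : IsHochsterDecomposition φ₁ φ₂ φ₃) {s : ℝ} (hs : s ^ 2 = 1) (c : ℝ)
    {t : ℝ} (ht : t ≠ 0) :
    φ₁ (t, s * t, c) + φ₂ (t, s * t, c) + s * φ₃ (t, s * t, c) * c ^ 2 = s * c := by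
  refine mul_right_cancel₀ (pow_ne_zero 2 ht) ?_
  linear_combination -h t (s * t) c - φ₂ (t, s * t, c) * t ^ 2 * hs

theorem diagonal_eq_at_zero (h : IsHochsterDecomposition φ₁ φ₂ φ₃) (h₁ : Continuous φ₁)
    (h₂ : Continuous φ₂) (h₃ : Continuous φ₃) {s : ℝ} (hs : s ^ 2 = 1) (c : ℝ) :
    φ₁ (0, 0, c) + φ₂ (0, 0, c) + s * φ₃ (0, 0, c) * c ^ 2 = s * c := by
  have hψ : Continuous fun t ↦
      φ₁ (t, s * t, c) + φ₂ (t, s * t, c) + s * φ₃ (t, s * t, c) * c ^ 2 := by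
    fun_prop
  have := congrFun ((hψ.ext_on (dense_compl_singleton 0) continuous_const)
    fun t ht ↦ h.diagonal_eq hs c ht) 0
  simpa using this

theorem mul_phi₃_eq_one (h : IsHochsterDecomposition φ₁ φ₂ φ₃) (h₁ : Continuous φ₁)
    (h₂ : Continuous φ₂) (h₃ : Continuous φ₃) {c : ℝ} (hc : c ≠ 0) :
    c * φ₃ (0, 0, c) = 1 := by
  have hplus := h.diagonal_eq_at_zero h₁ h₂ h₃ (s := 1) (by norm_num) c
  have hminus := h.diagonal_eq_at_zero h₁ h₂ h₃ (s := -1) (by norm_num) c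
  refine mul_left_cancel₀ hc ?_
  linear_combination (hplus - hminus) / 2

end IsHochsterDecomposition

/-- Hochster's example: `xyz` cannot be written as
`φ₁·x² + φ₂·y² + φ₃·xyz²` with `φ₁, φ₂, φ₃` continuous on `ℝ³`. -/
theorem statement3 :
    ¬ ∃ φ₁ φ₂ φ₃ : ℝ × ℝ × ℝ → ℝ,
      Continuous φ₁ ∧ Continuous φ₂ ∧ Continuous φ₃ ∧
      ∀ x y z : ℝ, x * y * z =
        φ₁ (x, y, z) * x ^ 2 + φ₂ (x, y, z) * y ^ 2 + φ₃ (x, y, z) * (x * y * z ^ 2) := by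
  rintro ⟨φ₁, φ₂, φ₃, h₁, h₂, h₃, h⟩
  have hψ : Continuous fun c ↦ c * φ₃ (0, 0, c) := by fun_prop
  have := congrFun ((hψ.ext_on (dense_compl_singleton 0) continuous_const)
    fun c hc ↦ IsHochsterDecomposition.mul_phi₃_eq_one h h₁ h₂ h₃ hc) 0
  simp at this
end

section
/- For every point p = (a,b,c) ∈ ℝ^3, there exist constants c_1, c_2, c_3 ∈ ℝ such that (xyz − c_1 x² − c_2 y² − c_3 xyz²)/(x² + y² + |xyz²|) → 0 as (x,y,z) → p along points where (x,y) ≠ (0,0), and xyz − c_1 x² − c_2 y² − c_3 xyz² → 0 as (x,y,z) → p. (If c ≠ 0 take c_3 = 1/c and c_1 = c_2 = 0; if c = 0 take all c_i = 0.) -/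
/-! With `c₃ = 1/c`, the numerator is `xy · z(1 - c₃z)`. Since `x² + y² ≥ 2|xy|`, the denominator
dominates `|xy|(1 + z²)`, so the quotient is bounded by `|z(1 - c₃z)| / (1 + z²)`: a continuous
function of `z` alone that vanishes at `z = c`. -/

open Filter Topology

lemma sq_add_sq_pos_of_ne_zero {x y : ℝ} (h : (x, y) ≠ (0, 0)) : 0 < x ^ 2 + y ^ 2 := by
  rcases (by simpa [or_iff_not_imp_left] using h : x ≠ 0 ∨ y ≠ 0) with hx | hy <;> positivity

lemma abs_mul_mul_one_add_sq_le (x y z : ℝ) :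
    |x * y| * (1 + z ^ 2) ≤ x ^ 2 + y ^ 2 + |x * y * z ^ 2| := by
  have hxy : 2 * |x * y| ≤ x ^ 2 + y ^ 2 := by
    simpa only [abs_mul, mul_assoc, sq_abs] using two_mul_le_add_sq |x| |y|
  rw [abs_mul (x * y), abs_of_nonneg (sq_nonneg z)]
  linarith [abs_nonneg (x * y)]

lemma abs_mul_div_le {x y : ℝ} (h : (x, y) ≠ (0, 0)) (z w : ℝ) :
    |x * y * w / (x ^ 2 + y ^ 2 + |x * y * z ^ 2|)| ≤ |w| / (1 + z ^ 2) := by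
  have hden : 0 < x ^ 2 + y ^ 2 + |x * y * z ^ 2| := by
    linarith [sq_add_sq_pos_of_ne_zero h, abs_nonneg (x * y * z ^ 2)]
  rw [abs_div, abs_of_pos hden, div_le_div_iff₀ hden (by positivity), abs_mul]
  calc |x * y| * |w| * (1 + z ^ 2) = |w| * (|x * y| * (1 + z ^ 2)) := by ring
    _ ≤ |w| * (x ^ 2 + y ^ 2 + |x * y * z ^ 2|) :=
      mul_le_mul_of_nonneg_left (abs_mul_mul_one_add_sq_le x y z) (abs_nonneg w)

/-- Hochster's example passes the pointwise test at every point of `ℝ³`: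
for every `p = (a,b,c)` there are constants `c₁, c₂, c₃` such that
`(xyz − c₁x² − c₂y² − c₃xyz²)/(x² + y² + |xyz²|) → 0` as `(x,y,z) → p` along points
with `(x,y) ≠ (0,0)`, and `xyz − c₁x² − c₂y² − c₃xyz² → 0` as `(x,y,z) → p`. -/
theorem statement4 (a b c : ℝ) :
    ∃ c₁ c₂ c₃ : ℝ,
      Tendsto (fun q : ℝ × ℝ × ℝ =>
          (q.1 * q.2.1 * q.2.2 - c₁ * q.1 ^ 2 - c₂ * q.2.1 ^ 2
              - c₃ * (q.1 * q.2.1 * q.2.2 ^ 2)) /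
            (q.1 ^ 2 + q.2.1 ^ 2 + |q.1 * q.2.1 * q.2.2 ^ 2|))
        (𝓝[{q : ℝ × ℝ × ℝ | (q.1, q.2.1) ≠ (0, 0)}] (a, b, c)) (𝓝 0) ∧
      Tendsto (fun q : ℝ × ℝ × ℝ =>
          q.1 * q.2.1 * q.2.2 - c₁ * q.1 ^ 2 - c₂ * q.2.1 ^ 2
            - c₃ * (q.1 * q.2.1 * q.2.2 ^ 2))
        (𝓝 (a, b, c)) (𝓝 0) := by
  -- `c⁻¹ = 0` when `c = 0`, so `c₃ = c⁻¹` covers that case too.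
  have hvanish : c * (1 - c⁻¹ * c) = 0 := by rw [mul_sub, ← mul_assoc, mul_inv_mul_cancel]; ring
  have hnum : ∀ q : ℝ × ℝ × ℝ, q.1 * q.2.1 * q.2.2 - 0 * q.1 ^ 2 - 0 * q.2.1 ^ 2
      - c⁻¹ * (q.1 * q.2.1 * q.2.2 ^ 2) = q.1 * q.2.1 * (q.2.2 * (1 - c⁻¹ * q.2.2)) :=
    fun q => by ring
  refine ⟨0, 0, c⁻¹, ?_, ?_⟩
  · simp only [hnum]
    refine squeeze_zero_norm'
      (a := fun q : ℝ × ℝ × ℝ => |q.2.2 * (1 - c⁻¹ * q.2.2)| / (1 + q.2.2 ^ 2)) ?_ ?_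
    · filter_upwards [self_mem_nhdsWithin] with q hq using abs_mul_div_le hq _ _
    · have hcont : Continuous fun q : ℝ × ℝ × ℝ =>
          |q.2.2 * (1 - c⁻¹ * q.2.2)| / (1 + q.2.2 ^ 2) :=
        .div (by fun_prop) (by fun_prop) fun q => by positivity
      simpa [hvanish] using (hcont.tendsto (a, b, c)).mono_left nhdsWithin_le_nhds
  · simp only [hnum]
    have hcont : Continuous fun q : ℝ × ℝ × ℝ => q.1 * q.2.1 * (q.2.2 * (1 - c⁻¹ * q.2.2)) := by
      fun_prop
    simpa [hvanish] using hcont.tendsto (a, b, c)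
end

section
/- There do not exist continuous functions φ_1, φ_2 : ℝ² → ℝ such that xy = φ_1(x,y)·x² + φ_2(x,y)·y² for all (x,y) ∈ ℝ². -/
open Topology

/- Restrict the identity to the lines `y = 0`, `x = 0` and `y = x`: away from the origin it forces
`φ₁ = 0`, `φ₂ = 0` and `φ₁ + φ₂ = 1` on them, and by continuity all three hold at the origin. -/

theorem Continuous.eq_of_forall_ne {X Y : Type*} [TopologicalSpace X] [TopologicalSpace Y]
    [T2Space Y] {f : X → Y} {x : X} [(𝓝[≠] x).NeBot] {c : Y} (hf : Continuous f)
    (h : ∀ t ≠ x, f t = c) : f x = c :=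
  congrFun (hf.ext_on (dense_compl_singleton x) continuous_const h) x

/-- `xy` cannot be written as `φ₁·x² + φ₂·y²` with `φ₁, φ₂` continuous on `ℝ²`. -/
theorem statement5 :
    ¬ ∃ φ₁ φ₂ : ℝ × ℝ → ℝ,
      Continuous φ₁ ∧ Continuous φ₂ ∧
      ∀ x y : ℝ, x * y = φ₁ (x, y) * x ^ 2 + φ₂ (x, y) * y ^ 2 := by
  rintro ⟨φ₁, φ₂, hφ₁, hφ₂, h⟩
  have h₁ : φ₁ (0, 0) = 0 := by
    refine (hφ₁.comp (continuous_id.prodMk continuous_const)).eq_of_forall_ne fun t ht => ?_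
    simpa [ht] using (h t 0).symm
  have h₂ : φ₂ (0, 0) = 0 := by
    refine (hφ₂.comp (continuous_const.prodMk continuous_id)).eq_of_forall_ne fun t ht => ?_
    simpa [ht] using (h 0 t).symm
  have h₁₂ : φ₁ (0, 0) + φ₂ (0, 0) = 1 := by
    refine ((hφ₁.add hφ₂).comp (continuous_id.prodMk continuous_id)).eq_of_forall_ne
      fun t ht => mul_right_cancel₀ (pow_ne_zero 2 ht) ?_
    simp only [Function.comp_apply, Pi.add_apply, id_eq]
    linear_combination -(h t t)
  rw [h₁, h₂] at h₁₂
  norm_num at h₁₂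
end

section
/- Let Q be a compact metric space and ℋ = (H_x)_{x∈Q} a family of affine subspaces H_x ⊆ ℝ^r (the empty set and ℝ^r allowed). Define the Glaeser refinement ℋ' = (H'_x) by H'_x = {λ ∈ H_x : dist(λ, H_y) → 0 as y → x in Q}. Then ℋ' is a subbundle of ℋ (H'_x ⊆ H_x for all x), and ℋ and ℋ' have the same sections, where a section is a continuous map f : Q → ℝ^r with f(x) ∈ H_x for all x. -/
open Filter Topology

/-- The Glaeser refinement of a bundle of fibers `H x ⊆ ℝ^r`:
`H' x` consists of the `v ∈ H x` with `dist(v, H y) → 0` as `y → x`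
(using the extended infimal distance, so that `dist(v, ∅) = +∞`). -/
def glaeserRef {Q : Type*} [MetricSpace Q] {r : ℕ}
    (H : Q → Set (EuclideanSpace ℝ (Fin r))) : Q → Set (EuclideanSpace ℝ (Fin r)) :=
  fun x => {v ∈ H x | Tendsto (fun y => EMetric.infEdist v (H y)) (𝓝 x) (𝓝 0)}

theorem tendsto_infEDist_of_eventually_mem {X E : Type*} [TopologicalSpace X]
    [PseudoEMetricSpace E] {f : X → E} {S : X → Set E} {x : X} (hf : ContinuousAt f x)
    (hS : ∀ᶠ y in 𝓝 x, f y ∈ S y) :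
    Tendsto (fun y => Metric.infEDist (f x) (S y)) (𝓝 x) (𝓝 0) := by
  have h_edist : Tendsto (fun y => edist (f y) (f x)) (𝓝 x) (𝓝 0) :=
    tendsto_iff_edist_tendsto_0.mp hf
  refine tendsto_of_tendsto_of_tendsto_of_le_of_le' tendsto_const_nhds h_edist
    (.of_forall fun _ => zero_le) ?_
  filter_upwards [hS] with y hy
  rw [edist_comm]
  exact Metric.infEDist_le_edist_of_mem hy

section GlaeserRefinement

variable {Q : Type*} [MetricSpace Q] {r : ℕ} (H : Q → Set (EuclideanSpace ℝ (Fin r)))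

theorem glaeserRef_subset (x : Q) : glaeserRef H x ⊆ H x :=
  fun _ hv => hv.1

theorem mem_glaeserRef_of_section {f : Q → EuclideanSpace ℝ (Fin r)} (hf : Continuous f)
    (hfH : ∀ y, f y ∈ H y) (x : Q) : f x ∈ glaeserRef H x :=
  ⟨hfH x, tendsto_infEDist_of_eventually_mem hf.continuousAt (.of_forall hfH)⟩

end GlaeserRefinement

theorem statement6_general (Q : Type*) [MetricSpace Q] (r : ℕ)
    (H : Q → AffineSubspace ℝ (EuclideanSpace ℝ (Fin r))) :
    (∀ x, glaeserRef (fun y => (H y : Set (EuclideanSpace ℝ (Fin r)))) x ⊆ (H x : Set _)) ∧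
    (∀ f : Q → EuclideanSpace ℝ (Fin r), Continuous f →
      ((∀ x, f x ∈ H x) ↔
        ∀ x, f x ∈ glaeserRef (fun y => (H y : Set (EuclideanSpace ℝ (Fin r)))) x)) :=
  ⟨glaeserRef_subset _, fun _ hf =>
    ⟨mem_glaeserRef_of_section _ hf, fun hf' x => glaeserRef_subset _ x (hf' x)⟩⟩

/-- The Glaeser refinement of a bundle of affine subspaces is a subbundle and has
the same (continuous) sections as the original bundle. -/
theorem statement6 (Q : Type*) [MetricSpace Q] [CompactSpace Q] (r : ℕ)
    (H : Q → AffineSubspace ℝ (EuclideanSpace ℝ (Fin r))) :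
    (∀ x, glaeserRef (fun y => (H y : Set (EuclideanSpace ℝ (Fin r)))) x ⊆ (H x : Set _)) ∧
    (∀ f : Q → EuclideanSpace ℝ (Fin r), Continuous f →
      ((∀ x, f x ∈ H x) ↔
        ∀ x, f x ∈ glaeserRef (fun y => (H y : Set (EuclideanSpace ℝ (Fin r)))) x)) :=
  statement6_general Q r H
end

section
/- Let Q be a compact metric space and ℋ = (H_x)_{x∈Q} a bundle of affine subspaces of ℝ^r. Let ℋ⁰ = ℋ and ℋ^{i+1} be the Glaeser refinement of ℋ^i. Then ℋ^{2r+1} = ℋ^{2r+2} = ℋ^{2r+3} = ⋯, i.e. the iterated Glaeser refinements stabilize after 2r+1 steps. -/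
open Filter Topology
open scoped ENNReal

namespace GlaeserAux

variable {Q : Type*} [MetricSpace Q] {r : ℕ}

local notation "E" => EuclideanSpace ℝ (Fin r)

lemma ref_subset (H : Q → Set E) (x : Q) : glaeserRef H x ⊆ H x := fun _ hv => hv.1

lemma iter_subset (i : ℕ) (H : Q → Set E) (x : Q) : glaeserRef^[i] H x ⊆ H x := by
  induction i generalizing H with
  | zero => simp
  | succ i ih =>
    rw [Function.iterate_succ_apply]
    exact (ih (glaeserRef H)).trans (ref_subset H x)

lemma iter_mono {i j : ℕ} (h : j ≤ i) (H : Q → Set E) (x : Q) :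
    glaeserRef^[i] H x ⊆ glaeserRef^[j] H x := by
  obtain ⟨m, rfl⟩ := Nat.exists_eq_add_of_le h
  rw [Nat.add_comm, Function.iterate_add_apply]
  exact iter_subset m _ x

noncomputable def fdim (S : Set E) : ℕ := Module.finrank ℝ (vectorSpan ℝ S)

lemma fdim_mono {S T : Set E} (h : S ⊆ T) : fdim S ≤ fdim T :=
  Submodule.finrank_mono (vectorSpan_mono ℝ h)

lemma fdim_le (S : Set E) : fdim S ≤ r := by
  have h := Submodule.finrank_le (vectorSpan ℝ S)
  rwa [finrank_euclideanSpace_fin] at h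

/-- All fibers are (possibly empty) affine subspaces. -/
def Aff (H : Q → Set E) : Prop := ∀ x, ∃ A : AffineSubspace ℝ E, H x = (A : Set E)

lemma ref_aff {H : Q → Set E} (hH : Aff H) : Aff (glaeserRef H) := by
  intro x
  refine ⟨⟨glaeserRef H x, ?_⟩, rfl⟩
  rintro c p₁ p₂ p₃ ⟨h₁, t₁⟩ ⟨h₂, t₂⟩ ⟨h₃, t₃⟩
  constructor
  · obtain ⟨A, hA⟩ := hH x
    rw [hA] at h₁ h₂ h₃ ⊢
    exact A.smul_vsub_vadd_mem c h₁ h₂ h₃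
  · rw [ENNReal.tendsto_nhds_zero]
    intro ε hε
    set m : ℝ≥0∞ := min ε 1 with hm
    have hm0 : 0 < m := lt_min hε zero_lt_one
    have hmtop : m ≠ ⊤ := ne_top_of_le_ne_top ENNReal.one_ne_top (min_le_right _ _)
    have hmr : 0 < m.toReal := ENNReal.toReal_pos hm0.ne' hmtop
    set ρ : ℝ := m.toReal / (2 * |c| + 2) with hρdef
    have hρ : 0 < ρ := by positivity
    have hev : ∀ᶠ y in 𝓝 x, EMetric.infEdist p₁ (H y) < ENNReal.ofReal ρ ∧
        EMetric.infEdist p₂ (H y) < ENNReal.ofReal ρ ∧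
        EMetric.infEdist p₃ (H y) < ENNReal.ofReal ρ := by
      have h1 := t₁.eventually_lt_const (ENNReal.ofReal_pos.2 hρ)
      have h2 := t₂.eventually_lt_const (ENNReal.ofReal_pos.2 hρ)
      have h3 := t₃.eventually_lt_const (ENNReal.ofReal_pos.2 hρ)
      filter_upwards [h1, h2, h3] with y hy1 hy2 hy3 using ⟨hy1, hy2, hy3⟩
    filter_upwards [hev] with y ⟨hy1, hy2, hy3⟩
    obtain ⟨q₁, hq₁, hd₁⟩ := EMetric.infEdist_lt_iff.1 hy1
    obtain ⟨q₂, hq₂, hd₂⟩ := EMetric.infEdist_lt_iff.1 hy2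
    obtain ⟨q₃, hq₃, hd₃⟩ := EMetric.infEdist_lt_iff.1 hy3
    rw [edist_lt_ofReal] at hd₁ hd₂ hd₃
    have hqmem : c • (q₁ -ᵥ q₂) +ᵥ q₃ ∈ H y := by
      obtain ⟨A, hA⟩ := hH y
      rw [hA] at hq₁ hq₂ hq₃ ⊢
      exact A.smul_vsub_vadd_mem c hq₁ hq₂ hq₃
    have hdist : dist (c • (p₁ -ᵥ p₂) +ᵥ p₃) (c • (q₁ -ᵥ q₂) +ᵥ q₃) ≤ m.toReal := by
      have heq : (c • (p₁ -ᵥ p₂) +ᵥ p₃) - (c • (q₁ -ᵥ q₂) +ᵥ q₃)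
          = c • ((p₁ - q₁) - (p₂ - q₂)) + (p₃ - q₃) := by
        simp only [vsub_eq_sub, vadd_eq_add]
        module
      rw [dist_eq_norm, heq]
      calc ‖c • ((p₁ - q₁) - (p₂ - q₂)) + (p₃ - q₃)‖
          ≤ ‖c • ((p₁ - q₁) - (p₂ - q₂))‖ + ‖p₃ - q₃‖ := norm_add_le _ _
        _ ≤ |c| * (‖p₁ - q₁‖ + ‖p₂ - q₂‖) + ‖p₃ - q₃‖ := by
            rw [norm_smul, Real.norm_eq_abs]
            gcongr
            exact norm_sub_le _ _
        _ ≤ |c| * (ρ + ρ) + ρ := by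
            rw [← dist_eq_norm, ← dist_eq_norm, ← dist_eq_norm]
            have h0 : (0:ℝ) ≤ |c| := abs_nonneg c
            gcongr
        _ ≤ (2 * |c| + 2) * ρ := by nlinarith [abs_nonneg c, hρ.le]
        _ = m.toReal := by
            rw [hρdef]
            field_simp
    calc EMetric.infEdist (c • (p₁ -ᵥ p₂) +ᵥ p₃) (H y)
        ≤ edist (c • (p₁ -ᵥ p₂) +ᵥ p₃) (c • (q₁ -ᵥ q₂) +ᵥ q₃) :=
          EMetric.infEdist_le_edist_of_mem hqmem
      _ = ENNReal.ofReal (dist (c • (p₁ -ᵥ p₂) +ᵥ p₃) (c • (q₁ -ᵥ q₂) +ᵥ q₃)) := edist_dist _ _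
      _ ≤ ENNReal.ofReal m.toReal := ENNReal.ofReal_le_ofReal hdist
      _ = m := ENNReal.ofReal_toReal hmtop
      _ ≤ ε := min_le_left _ _

lemma iter_aff {H : Q → Set E} (hH : Aff H) (i : ℕ) : Aff (glaeserRef^[i] H) := by
  induction i with
  | zero => simpa using hH
  | succ i ih =>
    rw [Function.iterate_succ_apply']
    exact ref_aff ih

lemma isOpen_AI (m : ℕ) :
    IsOpen {f : Fin (m + 1) → E | AffineIndependent ℝ f} := by
  have hset : {f : Fin (m + 1) → E | AffineIndependent ℝ f} =
      (fun (f : Fin (m + 1) → E) (i : {x : Fin (m + 1) // x ≠ 0}) => f ↑i -ᵥ f 0) ⁻¹'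
        {g : {x : Fin (m + 1) // x ≠ 0} → E | LinearIndependent ℝ g} := by
    ext f
    exact affineIndependent_iff_linearIndependent_vsub ℝ f 0
  rw [hset]
  apply IsOpen.preimage
  · exact continuous_pi fun i => (continuous_apply (↑i : Fin (m + 1))).vsub (continuous_apply 0)
  · exact isOpen_setOf_linearIndependent

lemma eventually_approx {H : Q → Set E} {x : Q} {n : ℕ} {p : Fin (n + 1) → E}
    (hp : AffineIndependent ℝ p) (hmem : ∀ i, p i ∈ glaeserRef H x) :
    ∀ᶠ y in 𝓝 x, ∃ q : Fin (n + 1) → E, AffineIndependent ℝ q ∧ ∀ i, q i ∈ H y := by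
  obtain ⟨ε, hε, hball⟩ := Metric.isOpen_iff.1 (isOpen_AI n) p hp
  have hev : ∀ᶠ y in 𝓝 x, ∀ i, EMetric.infEdist (p i) (H y) < ENNReal.ofReal ε :=
    eventually_all.2 fun i => (hmem i).2.eventually_lt_const (ENNReal.ofReal_pos.2 hε)
  filter_upwards [hev] with y hy
  choose q hqmem hqd using fun i => EMetric.infEdist_lt_iff.1 (hy i)
  refine ⟨q, ?_, hqmem⟩
  have hq : q ∈ Metric.ball p ε := by
    rw [Metric.mem_ball, dist_pi_lt_iff hε]
    intro i
    rw [dist_comm, ← edist_lt_ofReal]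
    exact hqd i
  exact hball hq

lemma exists_affInd {S : Set E} (hA : ∃ A : AffineSubspace ℝ E, S = (A : Set E))
    (hne : S.Nonempty) {d : ℕ} (hd : d ≤ fdim S) :
    ∃ p : Fin (d + 1) → E, AffineIndependent ℝ p ∧ ∀ i, p i ∈ S := by
  obtain ⟨A, rfl⟩ := hA
  obtain ⟨p0, hp0⟩ := hne
  have hdim : d ≤ Module.finrank ℝ A.direction := hd
  obtain ⟨v, hv⟩ := exists_linearIndependent_of_le_finrank hdim
  have hv' : LinearIndependent ℝ (fun i => (v i : E)) :=
    hv.map' A.direction.subtype (Submodule.ker_subtype _)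
  refine ⟨Fin.cons p0 (fun i => (v i : E) +ᵥ p0), ?_, ?_⟩
  · rw [affineIndependent_iff_linearIndependent_vsub ℝ _ 0]
    have hinj : Function.Injective
        (fun i : {x : Fin (d + 1) // x ≠ 0} => (↑i : Fin (d + 1)).pred i.2) := by
      intro a b hab
      apply Subtype.ext
      have h2 := congrArg Fin.succ hab
      simpa [Fin.succ_pred] using h2
    have heq : (fun i : {x : Fin (d + 1) // x ≠ 0} =>
          (Fin.cons p0 (fun j => (v j : E) +ᵥ p0) : Fin (d + 1) → E) ↑i -ᵥ
            (Fin.cons p0 (fun j => (v j : E) +ᵥ p0) : Fin (d + 1) → E) 0)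
        = (fun j => (v j : E)) ∘ (fun i : {x : Fin (d + 1) // x ≠ 0} =>
            (↑i : Fin (d + 1)).pred i.2) := by
      funext i
      simp only [Function.comp_apply, Fin.cons_zero]
      conv_lhs => rw [← Fin.succ_pred (↑i : Fin (d + 1)) i.2]
      rw [Fin.cons_succ]
      exact vadd_vsub _ _
    rw [heq]
    exact hv'.comp _ hinj
  · intro i
    refine Fin.cases ?_ ?_ i
    · rw [Fin.cons_zero]; exact hp0
    · intro j
      rw [Fin.cons_succ]
      exact AffineSubspace.vadd_mem_of_mem_direction (v j).2 hp0

lemma aff_eq_of_le_dim {S T : Set E} (hS : ∃ A : AffineSubspace ℝ E, S = (A : Set E))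
    (hT : ∃ B : AffineSubspace ℝ E, T = (B : Set E)) (hST : S ⊆ T) (hne : S.Nonempty)
    (hdim : fdim T ≤ fdim S) : S = T := by
  obtain ⟨A, rfl⟩ := hS
  obtain ⟨B, rfl⟩ := hT
  obtain ⟨p, hp⟩ := hne
  have hle : A ≤ B := hST
  have hdir : A.direction = B.direction :=
    Submodule.eq_of_le_of_finrank_le (AffineSubspace.direction_le hle) hdim
  have : A = B := AffineSubspace.ext_of_direction_eq hdir ⟨p, hp, hST hp⟩
  rw [this]

lemma aff_univ {S : Set E} (hS : ∃ A : AffineSubspace ℝ E, S = (A : Set E))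
    (hne : S.Nonempty) (hdim : r ≤ fdim S) : S = Set.univ := by
  obtain ⟨A, rfl⟩ := hS
  obtain ⟨p0, hp0⟩ := hne
  have hfr : Module.finrank ℝ A.direction = Module.finrank ℝ E := by
    rw [finrank_euclideanSpace_fin]
    exact le_antisymm (fdim_le _) hdim
  have hdir : A.direction = ⊤ := Submodule.eq_top_of_finrank_eq hfr
  apply Set.eq_univ_of_forall
  intro v
  have : v = (v -ᵥ p0) +ᵥ p0 := (vsub_vadd v p0).symm
  rw [this]
  exact AffineSubspace.vadd_mem_of_mem_direction (hdir ▸ Submodule.mem_top) hp0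

lemma eventually_fdim {H : Q → Set E} {x : Q} {d : ℕ}
    (hA : ∃ A : AffineSubspace ℝ E, glaeserRef H x = (A : Set E))
    (hne : (glaeserRef H x).Nonempty) (hd : d ≤ fdim (glaeserRef H x)) :
    ∀ᶠ y in 𝓝 x, (H y).Nonempty ∧ d ≤ fdim (H y) := by
  obtain ⟨p, hp, hpmem⟩ := exists_affInd hA hne hd
  filter_upwards [eventually_approx hp hpmem] with y ⟨q, hq, hqmem⟩
  refine ⟨⟨q 0, hqmem 0⟩, ?_⟩
  have h1 : Module.finrank ℝ (vectorSpan ℝ (Set.range q)) = d :=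
    hq.finrank_vectorSpan (by simp)
  have h2 : vectorSpan ℝ (Set.range q) ≤ vectorSpan ℝ (H y) :=
    vectorSpan_mono ℝ (Set.range_subset_iff.2 hqmem)
  calc d = Module.finrank ℝ (vectorSpan ℝ (Set.range q)) := h1.symm
    _ ≤ fdim (H y) := Submodule.finrank_mono h2

lemma propagate {H : Q → Set E} {U : Set Q} (hU : IsOpen U)
    (h : ∀ y ∈ U, glaeserRef H y = H y) :
    ∀ i, ∀ y ∈ U, glaeserRef^[i] H y = H y := by
  intro i
  induction i with
  | zero => intro y _; rfl
  | succ i ih =>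
    intro y hy
    rw [Function.iterate_succ_apply']
    apply Set.Subset.antisymm
    · exact (ref_subset _ y).trans (ih y hy).subset
    · intro v hv
      have hv' : v ∈ glaeserRef H y := (h y hy).symm ▸ hv
      refine ⟨(ih y hy).symm ▸ hv, ?_⟩
      refine (hv'.2).congr' ?_
      filter_upwards [hU.mem_nhds hy] with z hz
      rw [ih z hz]

lemma stable_up {H : Q → Set E} {U : Set Q} {n : ℕ} (hU : IsOpen U)
    (h : ∀ y ∈ U, glaeserRef (glaeserRef^[n] H) y = glaeserRef^[n] H y) :
    ∀ m, n ≤ m → ∀ y ∈ U, ∀ i, glaeserRef^[m + i] H y = glaeserRef^[m] H y := by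
  have hp := propagate hU h
  intro m hm y hy i
  obtain ⟨j, rfl⟩ := Nat.exists_eq_add_of_le hm
  have e1 : n + j + i = (j + i) + n := by omega
  have e2 : n + j = j + n := by omega
  rw [e1, e2, Function.iterate_add_apply glaeserRef (j + i) n H,
    Function.iterate_add_apply glaeserRef j n H, hp (j + i) y hy, hp j y hy]

lemma keyP {H : Q → Set E} (hH : Aff H) :
    ∀ k : ℕ, ∀ x : Q, (glaeserRef^[2 * k + 1] H x).Nonempty →
      r - k ≤ fdim (glaeserRef^[2 * k + 1] H x) →
      ∃ U : Set Q, IsOpen U ∧ x ∈ U ∧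
        ∀ y ∈ U, ∀ i, glaeserRef^[2 * k + 1 + i] H y = glaeserRef^[2 * k + 1] H y := by
  intro k
  induction k with
  | zero =>
    intro x hne hd
    have hidx : 2 * 0 + 1 = 0 + 1 := by omega
    rw [hidx] at hne hd ⊢
    have hone : glaeserRef^[0 + 1] H = glaeserRef (glaeserRef^[0] H) := by
      rw [← Function.iterate_succ_apply' glaeserRef 0 H]
    have hd' : r ≤ fdim (glaeserRef (glaeserRef^[0] H) x) := by
      rw [← hone]; omega
    have hne' : (glaeserRef (glaeserRef^[0] H) x).Nonempty := by rw [← hone]; exact hne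
    have hA : ∃ A : AffineSubspace ℝ E, glaeserRef (glaeserRef^[0] H) x = (A : Set E) := by
      rw [← hone]; exact iter_aff hH (0 + 1) x
    have hev := eventually_fdim hA hne' hd'
    obtain ⟨U, hU, hUo, hxU⟩ := eventually_nhds_iff.1 hev
    have huniv : ∀ z ∈ U, glaeserRef^[0] H z = Set.univ := by
      intro z hz
      exact aff_univ (iter_aff hH 0 z) (hU z hz).1 (hU z hz).2
    have hstep : ∀ z ∈ U, glaeserRef (glaeserRef^[0] H) z = glaeserRef^[0] H z := by
      intro z hz
      apply Set.Subset.antisymm (ref_subset _ z)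
      intro v hv
      refine ⟨hv, ?_⟩
      have heq : (fun w => EMetric.infEdist v (glaeserRef^[0] H w)) =ᶠ[𝓝 z]
          (fun _ => (0 : ℝ≥0∞)) := by
        filter_upwards [hUo.mem_nhds hz] with w hw
        rw [huniv w hw]
        exact EMetric.infEdist_zero_of_mem (Set.mem_univ v)
      exact Tendsto.congr' heq.symm tendsto_const_nhds
    exact ⟨U, hUo, hxU, fun y hy i => stable_up hUo hstep (0 + 1) (by omega) y hy i⟩
  | succ k ih =>
    intro x hne hd
    set n1 := 2 * k + 1 with hn1
    have hidx : 2 * (k + 1) + 1 = n1 + 2 := by omega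
    rw [hidx] at hne hd ⊢
    have hsub : glaeserRef^[n1 + 2] H x ⊆ glaeserRef^[n1] H x := iter_mono (by omega) H x
    by_cases hc : r - k ≤ fdim (glaeserRef^[n1] H x)
    · obtain ⟨U, hUo, hxU, hstab⟩ := ih x (hne.mono hsub) hc
      refine ⟨U, hUo, hxU, fun y hy i => ?_⟩
      have e1 : n1 + 2 + i = n1 + (2 + i) := by omega
      rw [e1, hstab y hy (2 + i), ← hstab y hy 2]
    · push_neg at hc
      have hkr : k < r := by omega
      have hrw : glaeserRef^[n1 + 2] H = glaeserRef (glaeserRef^[n1 + 1] H) := by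
        rw [← Function.iterate_succ_apply' glaeserRef (n1 + 1) H]
      have hA : ∃ A : AffineSubspace ℝ E,
          glaeserRef (glaeserRef^[n1 + 1] H) x = (A : Set E) := by
        rw [← hrw]; exact iter_aff hH (n1 + 2) x
      have hne' : (glaeserRef (glaeserRef^[n1 + 1] H) x).Nonempty := by
        rw [← hrw]; exact hne
      have hd' : r - (k + 1) ≤ fdim (glaeserRef (glaeserRef^[n1 + 1] H) x) := by
        rw [← hrw]; exact hd
      have hev := eventually_fdim hA hne' hd'
      obtain ⟨U, hU, hUo, hxU⟩ := eventually_nhds_iff.1 hev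
      have hone : glaeserRef^[n1 + 1] H = glaeserRef (glaeserRef^[n1] H) := by
        rw [← Function.iterate_succ_apply' glaeserRef n1 H]
      have hstep : ∀ z ∈ U, glaeserRef (glaeserRef^[n1] H) z = glaeserRef^[n1] H z := by
        intro z hz
        obtain ⟨hzne, hzd⟩ := hU z hz
        rw [hone] at hzne hzd
        have hsubz : glaeserRef (glaeserRef^[n1] H) z ⊆ glaeserRef^[n1] H z := ref_subset _ z
        have hne1z : (glaeserRef^[n1] H z).Nonempty := hzne.mono hsubz
        by_cases hzc : r - k ≤ fdim (glaeserRef^[n1] H z)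
        · obtain ⟨V, hVo, hzV, hstab⟩ := ih z hne1z hzc
          have h1 := hstab z hzV 1
          rw [show n1 + 1 = n1 + 1 from rfl, hone] at h1
          exact h1
        · push_neg at hzc
          refine aff_eq_of_le_dim ?_ (iter_aff hH n1 z) hsubz hzne ?_
          · rw [← hone]; exact iter_aff hH (n1 + 1) z
          · have h1 : fdim (glaeserRef^[n1] H z) ≤ r - (k + 1) := by omega
            omega
      have hstab := stable_up hUo hstep
      exact ⟨U, hUo, hxU, fun y hy i => hstab (n1 + 2) (by omega) y hy i⟩

end GlaeserAux

/-- Stabilization Lemma: the iterated Glaeser refinements of a bundle of (possibly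
empty) affine subspaces of `ℝ^r` over a compact metric space stabilize after
`2r+1` steps. -/
theorem statement7 (Q : Type*) [MetricSpace Q] [CompactSpace Q] (r : ℕ)
    (H : Q → Set (EuclideanSpace ℝ (Fin r)))
    (hH : ∀ x, ∃ A : AffineSubspace ℝ (EuclideanSpace ℝ (Fin r)), H x = (A : Set _)) :
    ∀ ℓ : ℕ, 2 * r + 1 ≤ ℓ → glaeserRef^[ℓ] H = glaeserRef^[2 * r + 1] H := by
  intro ℓ hℓ
  obtain ⟨j, rfl⟩ : ∃ j, ℓ = 2 * r + 1 + j := ⟨ℓ - (2 * r + 1), by omega⟩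
  funext x
  rcases Set.eq_empty_or_nonempty (glaeserRef^[2 * r + 1] H x) with hemp | hne
  · have hsub := GlaeserAux.iter_mono (show 2 * r + 1 ≤ 2 * r + 1 + j by omega) H x
    rw [hemp] at hsub ⊢
    exact Set.subset_empty_iff.1 hsub
  · have he : GlaeserAux.fdim (glaeserRef^[2 * r + 1] H x) ≤ r := GlaeserAux.fdim_le _
    set e := GlaeserAux.fdim (glaeserRef^[2 * r + 1] H x) with hedef
    set k := r - e with hkdef
    have hsub : glaeserRef^[2 * r + 1] H x ⊆ glaeserRef^[2 * k + 1] H x :=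
      GlaeserAux.iter_mono (by omega) H x
    have h4 : e ≤ GlaeserAux.fdim (glaeserRef^[2 * k + 1] H x) := GlaeserAux.fdim_mono hsub
    have hd : r - k ≤ GlaeserAux.fdim (glaeserRef^[2 * k + 1] H x) := by omega
    obtain ⟨U, hUo, hxU, hstab⟩ := GlaeserAux.keyP hH k x (hne.mono hsub) hd
    have h2 := hstab x hxU (2 * r + 1 + j - (2 * k + 1))
    have h3 := hstab x hxU (2 * r + 1 - (2 * k + 1))
    rw [show 2 * k + 1 + (2 * r + 1 + j - (2 * k + 1)) = 2 * r + 1 + j by omega] at h2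
    rw [show 2 * k + 1 + (2 * r + 1 - (2 * k + 1)) = 2 * r + 1 by omega] at h3
    rw [h2, h3]
end

section
/- Let Q be a compact metric space and ℋ = (H_x)_{x∈Q} a bundle of affine subspaces of ℝ^r such that ℋ equals its own Glaeser refinement and every fiber H_x is non-empty. Then ℋ has a section, i.e. there exists a continuous f : Q → ℝ^r with f(x) ∈ H_x for all x ∈ Q. -/
open Filter Topology

open Metric Set

/-- One approximation step in Michael's selection theorem: improve an `ε`-approximate
section to an `ε/2`-approximate section, moving by at most `2 * ε`. -/
private lemma approx_step {Q : Type*} [MetricSpace Q] {r : ℕ}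
    {H : Q → Set (EuclideanSpace ℝ (Fin r))}
    (hconv : ∀ x, Convex ℝ (H x)) (hne : ∀ x, (H x).Nonempty)
    (hlsc : ∀ x, ∀ v ∈ H x, Tendsto (fun y => EMetric.infEdist v (H y)) (𝓝 x) (𝓝 0))
    {ε : ℝ} (hε : 0 < ε) (g : Q → EuclideanSpace ℝ (Fin r)) (hg : Continuous g)
    (hgd : ∀ x, Metric.infDist (g x) (H x) < ε) :
    ∃ g' : Q → EuclideanSpace ℝ (Fin r), Continuous g' ∧
      (∀ x, Metric.infDist (g' x) (H x) < ε / 2) ∧ ∀ x, dist (g' x) (g x) ≤ 2 * ε := by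
  have hv : ∀ x, ∃ v ∈ H x, dist (g x) v < ε := fun x =>
    (Metric.infDist_lt_iff (hne x)).1 (hgd x)
  choose v hvH hvd using hv
  set δ : ℝ := ε / 4 with hδ
  have hδ0 : 0 < δ := by positivity
  set S : Q → Set Q := fun x =>
    {y | EMetric.infEdist (v x) (H y) < ENNReal.ofReal δ ∧ dist (g y) (g x) < δ} with hSdef
  have hS : ∀ x, S x ∈ 𝓝 x := by
    intro x
    have h1 : ∀ᶠ y in 𝓝 x, EMetric.infEdist (v x) (H y) < ENNReal.ofReal δ :=
      (hlsc x (v x) (hvH x)).eventually_lt_const (by simp [ENNReal.ofReal_pos, hδ0])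
    have h2 : ∀ᶠ y in 𝓝 x, dist (g y) (g x) < δ :=
      (hg.tendsto x) (Metric.ball_mem_nhds (g x) hδ0)
    exact h1.and h2
  set U : Q → Set Q := fun x => interior (S x) with hUdef
  obtain ⟨ρ, hρ⟩ := PartitionOfUnity.exists_isSubordinate isClosed_univ U
    (fun x => isOpen_interior)
    (fun x _ => Set.mem_iUnion.2 ⟨x, mem_interior_iff_mem_nhds.2 (hS x)⟩)
  set g' : Q → EuclideanSpace ℝ (Fin r) := fun y => ∑ᶠ x, ρ x y • v x with hg'def
  have hg'cont : Continuous g' :=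
    ρ.continuous_finsum_smul (fun i x _ => continuousAt_const)
  have hmemS : ∀ y, ∀ i ∈ ρ.finsupport y,
      EMetric.infEdist (v i) (H y) < ENNReal.ofReal δ ∧ dist (g y) (g i) < δ := by
    intro y i hi
    have hy : y ∈ tsupport (ρ i) := subset_closure ((ρ.mem_finsupport y).1 hi)
    have hyS : y ∈ S i := interior_subset (hρ i hy)
    exact hyS
  have hrepr : ∀ y, g' y = ∑ i ∈ ρ.finsupport y, ρ i y • v i := fun y =>
    (ρ.sum_finsupport_smul_eq_finsum (fun i _ => v i)).symm
  have hone : ∀ y, ∑ i ∈ ρ.finsupport y, ρ i y = 1 := fun y =>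
    ρ.sum_finsupport (mem_univ y)
  refine ⟨g', hg'cont, ?_, ?_⟩
  · intro y
    have hw : ∀ i, ∃ w, i ∈ ρ.finsupport y → w ∈ H y ∧ dist (v i) w < δ := by
      intro i
      by_cases hi : i ∈ ρ.finsupport y
      · obtain ⟨w, hwH, hwd⟩ := EMetric.infEdist_lt_iff.1 (hmemS y i hi).1
        exact ⟨w, fun _ => ⟨hwH, by rwa [edist_lt_ofReal] at hwd⟩⟩
      · exact ⟨(hne y).some, fun h => absurd h hi⟩
    choose w hw using hw
    have hpH : (∑ i ∈ ρ.finsupport y, ρ i y • w i) ∈ H y :=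
      (hconv y).sum_mem (fun i _ => ρ.nonneg i y) (hone y) (fun i hi => (hw i hi).1)
    have hd : dist (g' y) (∑ i ∈ ρ.finsupport y, ρ i y • w i) ≤ δ := by
      rw [hrepr y, dist_eq_norm, ← Finset.sum_sub_distrib]
      calc ‖∑ i ∈ ρ.finsupport y, (ρ i y • v i - ρ i y • w i)‖
          ≤ ∑ i ∈ ρ.finsupport y, ‖ρ i y • (v i - w i)‖ := by
            simp_rw [← smul_sub]; exact norm_sum_le _ _
        _ ≤ ∑ i ∈ ρ.finsupport y, ρ i y * δ := by
            refine Finset.sum_le_sum fun i hi => ?_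
            rw [norm_smul, Real.norm_of_nonneg (ρ.nonneg i y)]
            exact mul_le_mul_of_nonneg_left
              (by rw [← dist_eq_norm]; exact (hw i hi).2.le) (ρ.nonneg i y)
        _ = δ := by rw [← Finset.sum_mul, hone y, one_mul]
    calc Metric.infDist (g' y) (H y) ≤ dist (g' y) _ := Metric.infDist_le_dist_of_mem hpH
      _ ≤ δ := hd
      _ < ε / 2 := by rw [hδ]; linarith
  · intro y
    have key : (∑ i ∈ ρ.finsupport y, ρ i y • (v i - g y))
        = (∑ i ∈ ρ.finsupport y, ρ i y • v i) - g y := by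
      simp_rw [smul_sub, Finset.sum_sub_distrib, ← Finset.sum_smul, hone y, one_smul]
    rw [hrepr y, dist_eq_norm, ← key]
    calc ‖∑ i ∈ ρ.finsupport y, ρ i y • (v i - g y)‖
        ≤ ∑ i ∈ ρ.finsupport y, ‖ρ i y • (v i - g y)‖ := norm_sum_le _ _
      _ ≤ ∑ i ∈ ρ.finsupport y, ρ i y * (2 * ε) := by
          refine Finset.sum_le_sum fun i hi => ?_
          rw [norm_smul, Real.norm_of_nonneg (ρ.nonneg i y)]
          refine mul_le_mul_of_nonneg_left ?_ (ρ.nonneg i y)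
          rw [← dist_eq_norm]
          calc dist (v i) (g y) ≤ dist (v i) (g i) + dist (g i) (g y) := dist_triangle _ _ _
            _ ≤ ε + δ := by
                have h1 := hvd i
                have h2 := (hmemS y i hi).2
                rw [dist_comm (v i) (g i), dist_comm (g i) (g y)]
                exact add_le_add h1.le h2.le
            _ ≤ 2 * ε := by rw [hδ]; linarith
      _ = 2 * ε := by rw [← Finset.sum_mul, hone y, one_mul]

/-- Existence of sections: a Glaeser-stable bundle of non-empty affine subspaces of
`ℝ^r` over a compact metric space has a continuous section. -/
theorem statement8 (Q : Type*) [MetricSpace Q] [CompactSpace Q] (r : ℕ)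
    (H : Q → Set (EuclideanSpace ℝ (Fin r)))
    (hH : ∀ x, ∃ A : AffineSubspace ℝ (EuclideanSpace ℝ (Fin r)), H x = (A : Set _))
    (hne : ∀ x, (H x).Nonempty)
    (hstable : glaeserRef H = H) :
    ∃ f : Q → EuclideanSpace ℝ (Fin r), Continuous f ∧ ∀ x, f x ∈ H x := by
  classical
  cases isEmpty_or_nonempty Q with
  | inl h => exact ⟨fun _ => 0, continuous_const, fun x => isEmptyElim x⟩
  | inr hQ =>
  have hconv : ∀ x, Convex ℝ (H x) := fun x => by
    obtain ⟨A, hA⟩ := hH x; rw [hA]; exact A.convex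
  have hclosed : ∀ x, IsClosed (H x) := fun x => by
    obtain ⟨A, hA⟩ := hH x; rw [hA]; exact A.closed_of_finiteDimensional
  have hlsc : ∀ x, ∀ v ∈ H x,
      Tendsto (fun y => EMetric.infEdist v (H y)) (𝓝 x) (𝓝 0) := by
    intro x v hv
    rw [← congrFun hstable x] at hv
    exact hv.2
  -- uniform bound: the constant `0` map is a `C`-approximate section for some `C`
  choose v hv using fun x => hne x
  have hUnhds : ∀ x : Q, {y | EMetric.infEdist (v x) (H y) < ENNReal.ofReal 1} ∈ 𝓝 x :=
    fun x => (hlsc x (v x) (hv x)).eventually_lt_const (by simp)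
  obtain ⟨t, ht⟩ := IsCompact.elim_finite_subcover isCompact_univ
    (fun x : Q => interior {y | EMetric.infEdist (v x) (H y) < ENNReal.ofReal 1})
    (fun x => isOpen_interior)
    (fun x _ => Set.mem_iUnion.2 ⟨x, mem_interior_iff_mem_nhds.2 (hUnhds x)⟩)
  have htne : t.Nonempty := by
    obtain ⟨q⟩ := hQ
    obtain ⟨x, hx⟩ := Set.mem_iUnion₂.1 (ht (Set.mem_univ q))
    exact ⟨x, hx.1⟩
  set C : ℝ := 1 + t.sup' htne (fun x => ‖v x‖) with hCdef
  have hbase : ∀ y, Metric.infDist (0 : EuclideanSpace ℝ (Fin r)) (H y) < C + 1 := by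
    intro y
    obtain ⟨x, hxt, hxy⟩ := Set.mem_iUnion₂.1 (ht (Set.mem_univ y))
    have hyS : y ∈ {y | EMetric.infEdist (v x) (H y) < ENNReal.ofReal 1} :=
      interior_subset hxy
    obtain ⟨w, hwH, hwd⟩ := EMetric.infEdist_lt_iff.1 hyS
    rw [edist_lt_ofReal] at hwd
    have h1 : Metric.infDist (0 : EuclideanSpace ℝ (Fin r)) (H y) ≤ ‖w‖ := by
      have := Metric.infDist_le_dist_of_mem (x := (0 : EuclideanSpace ℝ (Fin r))) hwH
      rwa [dist_zero_left] at this
    have h2 : ‖w‖ ≤ ‖v x‖ + 1 := by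
      have := norm_sub_norm_le w (v x)
      have hd : ‖w - v x‖ < 1 := by rwa [← dist_eq_norm, dist_comm]
      linarith
    have h3 : ‖v x‖ ≤ t.sup' htne (fun x => ‖v x‖) := Finset.le_sup' (fun x => ‖v x‖) hxt
    rw [hCdef]; linarith
  set ε₀ : ℝ := C + 1 with hε₀def
  have hε₀pos : 0 < ε₀ := by
    have : (0:ℝ) ≤ t.sup' htne (fun x => ‖v x‖) := by
      obtain ⟨x, hx⟩ := htne
      exact le_trans (norm_nonneg (v x)) (Finset.le_sup' (fun x => ‖v x‖) hx)
    rw [hε₀def, hCdef]; linarith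
  -- iterate the approximation step
  set T : ℕ → Type _ := fun n =>
    {g : C(Q, EuclideanSpace ℝ (Fin r)) //
      ∀ x, Metric.infDist (g x) (H x) < ε₀ * (1/2) ^ n} with hTdef
  have step : ∀ n (g : T n), ∃ g' : T (n+1), dist g'.1 g.1 ≤ 2 * (ε₀ * (1/2) ^ n) := by
    intro n g
    obtain ⟨g', hc, h1, h2⟩ := approx_step hconv hne hlsc
      (show (0:ℝ) < ε₀ * (1/2) ^ n by positivity) g.1 g.1.continuous g.2
    refine ⟨⟨⟨g', hc⟩, fun x => ?_⟩, ?_⟩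
    · have := h1 x
      have heq : ε₀ * (1/2) ^ n / 2 = ε₀ * (1/2) ^ (n+1) := by ring
      rwa [heq] at this
    · rw [ContinuousMap.dist_le (by positivity)]
      exact fun x => h2 x
  choose step' hstep using step
  have hbase0 : ∀ x, Metric.infDist
      ((ContinuousMap.const Q (0 : EuclideanSpace ℝ (Fin r))) x) (H x) < ε₀ * (1/2) ^ 0 := by
    intro x; simpa using hbase x
  set G : ∀ n, T n := fun n => Nat.rec ⟨ContinuousMap.const Q 0, hbase0⟩ step' n with hGdef
  have hGd : ∀ n, dist (G (n+1)).1 (G n).1 ≤ 2 * (ε₀ * (1/2) ^ n) := fun n => hstep n (G n)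
  have hcau : CauchySeq (fun n => (G n).1) := by
    refine cauchySeq_of_le_geometric (1/2) (2*ε₀) (by norm_num) (fun n => ?_)
    calc dist (G n).1 (G (n+1)).1 = dist (G (n+1)).1 (G n).1 := dist_comm _ _
      _ ≤ 2 * (ε₀ * (1/2) ^ n) := hGd n
      _ = (2*ε₀) * (1/2) ^ n := by ring
  obtain ⟨f, hf⟩ := cauchySeq_tendsto_of_complete hcau
  refine ⟨f, f.continuous, fun x => ?_⟩
  have hle : ∀ n, Metric.infDist (f x) (H x) ≤ dist f (G n).1 + ε₀ * (1/2) ^ n := by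
    intro n
    calc Metric.infDist (f x) (H x)
        ≤ Metric.infDist ((G n).1 x) (H x) + dist (f x) ((G n).1 x) :=
          Metric.infDist_le_infDist_add_dist
      _ ≤ ε₀ * (1/2) ^ n + dist f (G n).1 :=
          add_le_add ((G n).2 x).le (ContinuousMap.dist_apply_le_dist x)
      _ = dist f (G n).1 + ε₀ * (1/2) ^ n := by ring
  have h1 : Tendsto (fun n => dist f (G n).1) atTop (𝓝 0) := by
    have := tendsto_iff_dist_tendsto_zero.1 hf
    simpa [dist_comm] using this
  have h2 : Tendsto (fun n => ε₀ * (1/2:ℝ) ^ n) atTop (𝓝 0) := by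
    simpa using (tendsto_pow_atTop_nhds_zero_of_lt_one (r := (1/2:ℝ)) (by norm_num) (by norm_num)).const_mul ε₀
  have htend : Tendsto (fun n => dist f (G n).1 + ε₀ * (1/2) ^ n) atTop (𝓝 0) := by
    simpa using h1.add h2
  have h0 : Metric.infDist (f x) (H x) = 0 :=
    le_antisymm (ge_of_tendsto' htend hle) Metric.infDist_nonneg
  exact ((hclosed x).mem_iff_infDist_zero (hne x)).2 h0
end

section
/- Let Q be a compact metric space and ℋ = (H_x)_{x∈Q} a bundle of non-empty affine subspaces of ℝ^r that is its own Glaeser refinement. Then ‖ℋ‖ := sup_{x∈Q} dist(0, H_x) is finite. -/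
open Filter Topology

/-- A Glaeser-stable bundle of non-empty affine subspaces over a compact metric space
has finite norm: `sup_x dist(0, H x) < ∞`. -/
theorem statement9 (Q : Type*) [MetricSpace Q] [CompactSpace Q] (r : ℕ)
    (H : Q → Set (EuclideanSpace ℝ (Fin r)))
    (hH : ∀ x, ∃ A : AffineSubspace ℝ (EuclideanSpace ℝ (Fin r)), H x = (A : Set _))
    (hne : ∀ x, (H x).Nonempty)
    (hstable : glaeserRef H = H) :
    ∃ C : ℝ, ∀ x, Metric.infDist 0 (H x) ≤ C := by
  have key : ∀ x : Q, ∃ U : Set Q, IsOpen U ∧ x ∈ U ∧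
      ∃ C : ℝ, ∀ y ∈ U, Metric.infDist 0 (H y) ≤ C := by
    intro x
    obtain ⟨v, hv⟩ := hne x
    have hv' : v ∈ glaeserRef H x := by rw [hstable]; exact hv
    have htend := hv'.2
    have h1 : {y | EMetric.infEdist v (H y) < ENNReal.ofReal 1} ∈ 𝓝 x := by
      have : Set.Iio (ENNReal.ofReal 1) ∈ 𝓝 (0 : ENNReal) :=
        Iio_mem_nhds (by simp)
      exact htend this
    obtain ⟨U, hUsub, hUopen, hxU⟩ := mem_nhds_iff.mp h1
    refine ⟨U, hUopen, hxU, ‖v‖ + 1, fun y hy => ?_⟩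
    obtain ⟨w, hw, hdw⟩ := EMetric.infEdist_lt_iff.mp (hUsub hy)
    have hdw' : dist v w < 1 := by
      rwa [edist_lt_ofReal] at hdw
    calc Metric.infDist 0 (H y) ≤ dist 0 w := Metric.infDist_le_dist_of_mem hw
      _ ≤ dist 0 v + dist v w := dist_triangle _ _ _
      _ ≤ ‖v‖ + 1 := by rw [dist_zero_left]; linarith
  choose U hUo hxU C hC using key
  have hcover : (Set.univ : Set Q) ⊆ ⋃ x, U x :=
    fun y _ => Set.mem_iUnion.mpr ⟨y, hxU y⟩
  obtain ⟨t, ht⟩ := isCompact_univ.elim_finite_subcover U hUo hcover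
  rcases t.eq_empty_or_nonempty with h | h
  · refine ⟨0, fun x => ?_⟩
    have := ht (Set.mem_univ x)
    simp [h] at this
  · refine ⟨t.sup' h C, fun x => ?_⟩
    obtain ⟨i, hi, hxi⟩ := Set.mem_iUnion₂.mp (ht (Set.mem_univ x))
    exact le_trans (hC i x hxi) (Finset.le_sup' C hi)
end

section
/- Let Q be a compact metric space and ℋ = (H_x)_{x∈Q} a Glaeser-stable bundle of non-empty affine subspaces of ℝ^r. Then for every ε > 0 there exists a continuous map g : Q → ℝ^r such that dist(g(y), H_y) ≤ ε for all y ∈ Q and |g(y)| ≤ ‖ℋ‖ + ε for all y ∈ Q, where ‖ℋ‖ = sup_{x∈Q} dist(0, H_x). -/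
open Filter Topology

/-!
The function `y ↦ dist(0, H y)` is upper semicontinuous on a Glaeser-stable bundle, so it is
bounded on the compact space `Q` by `‖ℋ‖`. Every `x` has a vector `c ∈ H x` with
`|c| ≤ ‖ℋ‖ + ε`, and by Glaeser stability `c` stays in the open `ε`-thickening of `H y` for
`y` near `x`. The sets `thickening ε (H y) ∩ closedBall 0 (‖ℋ‖ + ε)` are convex, so a
partition of unity glues these locally constant selections into a continuous one.
-/

open Metric

section Glaeser

variable {Q : Type*} [MetricSpace Q] {r : ℕ} {H : Q → Set (EuclideanSpace ℝ (Fin r))}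

theorem eventually_mem_thickening_of_mem_glaeserRef {x : Q} {v : EuclideanSpace ℝ (Fin r)}
    (hv : v ∈ glaeserRef H x) {δ : ℝ} (hδ : 0 < δ) :
    ∀ᶠ y in 𝓝 x, v ∈ thickening δ (H y) :=
  hv.2.eventually_lt_const (ENNReal.ofReal_pos.mpr hδ)

theorem upperSemicontinuous_infDist_of_glaeserRef_eq (hne : ∀ x, (H x).Nonempty)
    (hstable : glaeserRef H = H) (p : EuclideanSpace ℝ (Fin r)) :
    UpperSemicontinuous fun y => infDist p (H y) := by
  intro x c hc
  obtain ⟨w, hw, hpw⟩ := (infDist_lt_iff (hne x)).mp hc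
  have hw' : w ∈ glaeserRef H x := by rwa [hstable]
  filter_upwards [eventually_mem_thickening_of_mem_glaeserRef hw' (sub_pos.mpr hpw)]
    with y hy
  calc infDist p (H y) ≤ infDist w (H y) + dist p w := infDist_le_infDist_add_dist
    _ < c - dist p w + dist p w := by
        gcongr; exact (mem_thickening_iff_infDist_lt (hne y)).mp hy
    _ = c := sub_add_cancel _ _

end Glaeser

/-- For a Glaeser-stable bundle of non-empty affine subspaces over a compact metric
space and any `ε > 0`, there is a continuous `g : Q → ℝ^r` with
`dist(g y, H y) ≤ ε` and `|g y| ≤ ‖ℋ‖ + ε` for all `y`, where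
`‖ℋ‖ = sup_x dist(0, H x)`. -/
theorem statement10 (Q : Type*) [MetricSpace Q] [CompactSpace Q] (r : ℕ)
    (H : Q → Set (EuclideanSpace ℝ (Fin r)))
    (hH : ∀ x, ∃ A : AffineSubspace ℝ (EuclideanSpace ℝ (Fin r)), H x = (A : Set _))
    (hne : ∀ x, (H x).Nonempty)
    (hstable : glaeserRef H = H)
    (ε : ℝ) (hε : 0 < ε) :
    ∃ g : Q → EuclideanSpace ℝ (Fin r), Continuous g ∧
      (∀ y, Metric.infDist (g y) (H y) ≤ ε) ∧
      (∀ y, ‖g y‖ ≤ (⨆ x, Metric.infDist 0 (H x)) + ε) := by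
  set M := ⨆ x, infDist 0 (H x)
  have hbdd : BddAbove (Set.range fun x => infDist 0 (H x)) := by
    simpa [Set.image_univ] using
      ((upperSemicontinuous_infDist_of_glaeserRef_eq hne hstable 0).upperSemicontinuousOn
        Set.univ).bddAbove_of_isCompact isCompact_univ
  have hconv : ∀ y, Convex ℝ (thickening ε (H y) ∩ closedBall 0 (M + ε)) := fun y => by
    obtain ⟨A, hA⟩ := hH y
    exact (hA ▸ A.convex).thickening ε |>.inter (convex_closedBall 0 _)
  have hlocal : ∀ x, ∃ c, ∀ᶠ y in 𝓝 x, c ∈ thickening ε (H y) ∩ closedBall 0 (M + ε) := by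
    intro x
    obtain ⟨c, hc, h0c⟩ := (infDist_lt_iff (hne x)).mp (lt_add_of_pos_right _ hε)
    have hcM : c ∈ closedBall 0 (M + ε) := by
      rw [mem_closedBall, dist_comm]
      linarith [le_ciSup hbdd x]
    have hc' : c ∈ glaeserRef H x := by rwa [hstable]
    exact ⟨c, (eventually_mem_thickening_of_mem_glaeserRef hc' hε).mono fun y hy => ⟨hy, hcM⟩⟩
  obtain ⟨g, hg⟩ := exists_continuous_forall_mem_convex_of_local_const hconv hlocal
  refine ⟨g, g.continuous, fun y => ?_, fun y => ?_⟩
  · exact ((mem_thickening_iff_infDist_lt (hne y)).mp (hg y).1).le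
  · simpa using (hg y).2
end

section
/- Let f_1,...,f_r : Q → ℝ and φ : Q → ℝ be functions on a compact metric space Q, and define the bundle H_x = {(λ_1,...,λ_r) ∈ ℝ^r : ∑_i λ_i f_i(x) = φ(x)}. If φ and the f_i are continuous, then the first Glaeser refinement is given by H¹_x = {(λ_1,...,λ_r) ∈ ℝ^r : λ ∈ H_x and |∑_i λ_i f_i(y) − φ(y)| = o(∑_i |f_i(y)|) as y → x}. -/
/-!
The fibre `H y` is the affine hyperplane `{w | ⟪w, a⟫ = φ y}` with normal vector
`a = (f i y)ᵢ`, so the distance from `v` to it is `|⟪v, a⟫ - φ y| / ‖a‖₂`. Since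
`‖a‖₂ ≤ ∑ i |a i| ≤ r ‖a‖₂`, this distance tends to `0` exactly when the defect
`|⟪v, a⟫ - φ y|` is `o(∑ i |a i|)`. When `a = 0` the hyperplane is either empty or
everything, and the little-o condition (with right-hand side `0`) says it is everything.
-/

open Filter Topology

section Hyperplane

variable {ι : Type*} [Fintype ι]

theorem abs_sum_mul_sub_le_dist_mul {v w a : EuclideanSpace ℝ ι} {b : ℝ}
    (hw : ∑ i, w i * a i = b) :
    |∑ i, v i * a i - b| ≤ dist v w * ∑ i, |a i| := by
  calc |∑ i, v i * a i - b| = |∑ i, (v i - w i) * a i| := by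
        rw [← hw, ← Finset.sum_sub_distrib]
        simp only [sub_mul]
    _ ≤ ∑ i, |(v i - w i) * a i| := Finset.abs_sum_le_sum_abs _ _
    _ = ∑ i, |v i - w i| * |a i| := by simp only [abs_mul]
    _ ≤ ∑ i, dist v w * |a i| := by
        gcongr with i
        simpa only [Real.dist_eq] using PiLp.dist_apply_le v w i
    _ = dist v w * ∑ i, |a i| := (Finset.mul_sum ..).symm

theorem exists_sum_mul_eq_dist_le {v a : EuclideanSpace ℝ ι} {b c : ℝ} (hc : 0 ≤ c)
    (hv : |∑ i, v i * a i - b| ≤ c * ∑ i, |a i|) :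
    ∃ w : EuclideanSpace ℝ ι, ∑ i, w i * a i = b ∧ dist v w ≤ Fintype.card ι * c := by
  set S := ∑ i, v i * a i - b
  rcases eq_or_ne a 0 with rfl | ha
  · refine ⟨v, ?_, by rw [dist_self]; positivity⟩
    simpa [S, eq_comm] using hv
  have hnorm : 0 < ‖a‖ := norm_pos_iff.mpr ha
  have hsum_sq : ∑ i, a i * a i = ‖a‖ ^ 2 := by
    rw [EuclideanSpace.real_norm_sq_eq]
    simp only [sq]
  -- orthogonal projection of `v` onto the hyperplane
  refine ⟨v - (S / ‖a‖ ^ 2) • a, ?_, ?_⟩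
  · simp only [PiLp.sub_apply, PiLp.smul_apply, smul_eq_mul, sub_mul, Finset.sum_sub_distrib,
      mul_assoc, ← Finset.mul_sum, hsum_sq]
    field_simp
    ring
  · have hl1 : ∑ i, |a i| ≤ Fintype.card ι * ‖a‖ := by
      simpa using Finset.sum_le_sum fun i (_ : i ∈ Finset.univ) => PiLp.norm_apply_le a i
    rw [dist_eq_norm, sub_sub_cancel, norm_smul, Real.norm_eq_abs, abs_div, abs_pow, abs_norm,
      div_mul_eq_mul_div, sq, mul_div_mul_right _ _ hnorm.ne', div_le_iff₀ hnorm]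
    calc |S| ≤ c * ∑ i, |a i| := hv
      _ ≤ c * (Fintype.card ι * ‖a‖) := by gcongr
      _ = _ := by ring

end Hyperplane

theorem tendsto_infEDist_nhds_zero_iff {α β : Type*} [PseudoMetricSpace β] {l : Filter α}
    {v : β} {s : α → Set β} :
    Tendsto (fun y => Metric.infEDist v (s y)) l (𝓝 0) ↔
      ∀ ε > (0 : ℝ), ∀ᶠ y in l, ∃ w ∈ s y, dist v w < ε := by
  rw [ENNReal.tendsto_nhds_zero]
  constructor
  · intro h ε hε
    filter_upwards [h (ENNReal.ofReal (ε / 2)) (by simpa using hε)] with y hy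
    obtain ⟨w, hw, hvw⟩ := Metric.infEDist_lt_iff.mp
      (hy.trans_lt ((ENNReal.ofReal_lt_ofReal_iff hε).mpr (half_lt_self hε)))
    exact ⟨w, hw, by rwa [edist_dist, ENNReal.ofReal_lt_ofReal_iff hε] at hvw⟩
  · intro h ε hε
    rcases eq_or_ne ε ⊤ with rfl | hεtop
    · exact Eventually.of_forall fun _ => le_top
    filter_upwards [h ε.toReal (ENNReal.toReal_pos hε.ne' hεtop)] with y ⟨w, hw, hvw⟩
    calc Metric.infEDist v (s y) ≤ edist v w := Metric.infEDist_le_edist_of_mem hw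
      _ = ENNReal.ofReal (dist v w) := edist_dist v w
      _ ≤ ε := ENNReal.ofReal_le_of_le_toReal hvw.le

theorem statement11_general (Q : Type*) [MetricSpace Q] (r : ℕ)
    (f : Fin r → Q → ℝ) (φ : Q → ℝ)
    (H : Q → Set (EuclideanSpace ℝ (Fin r)))
    (hHdef : ∀ x, H x = {v | ∑ i, v i * f i x = φ x}) :
    ∀ x, glaeserRef H x =
      {v | v ∈ H x ∧ ∀ ε > (0 : ℝ), ∃ δ > (0 : ℝ), ∀ y : Q, dist y x < δ →
        |∑ i, v i * f i y - φ y| ≤ ε * ∑ i, |f i y|} := by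
  intro x
  ext v
  let a (y : Q) : EuclideanSpace ℝ (Fin r) := WithLp.toLp 2 (f · y)
  simp only [glaeserRef, Set.mem_ofPred_eq, ← Metric.eventually_nhds_iff, hHdef]
  refine and_congr_right fun _ =>
    tendsto_infEDist_nhds_zero_iff.trans ⟨fun h ε hε => ?_, fun h ε hε => ?_⟩
  · filter_upwards [h ε hε] with y ⟨w, hw, hvw⟩
    exact (abs_sum_mul_sub_le_dist_mul (a := a y) hw).trans (by gcongr)
  · have hr : (0 : ℝ) < r + 1 := by positivity
    filter_upwards [h (ε / (r + 1)) (by positivity)] with y hy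
    obtain ⟨w, hw, hvw⟩ := exists_sum_mul_eq_dist_le (a := a y) (by positivity) hy
    refine ⟨w, hw, hvw.trans_lt ?_⟩
    rw [Fintype.card_fin, mul_div_assoc', div_lt_iff₀ hr]
    linarith

/-- For the bundle `H x = {v : ∑ i v i * f i x = φ x}` attached to continuous
functions `f i, φ` on a compact metric space, the first Glaeser refinement is
`H¹ x = {v ∈ H x : |∑ i v i f i y − φ y| = o(∑ i |f i y|)` as `y → x}`. -/
theorem statement11 (Q : Type*) [MetricSpace Q] [CompactSpace Q] (r : ℕ)
    (f : Fin r → Q → ℝ) (φ : Q → ℝ)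
    (hf : ∀ i, Continuous (f i)) (hφ : Continuous φ)
    (H : Q → Set (EuclideanSpace ℝ (Fin r)))
    (hHdef : ∀ x, H x = {v | ∑ i, v i * f i x = φ x}) :
    ∀ x, glaeserRef H x =
      {v | v ∈ H x ∧ ∀ ε > (0 : ℝ), ∃ δ > (0 : ℝ), ∀ y : Q, dist y x < δ →
        |∑ i, v i * f i y - φ y| ≤ ε * ∑ i, |f i y|} :=
  statement11_general Q r f φ H hHdef
end

section
/- Let f_1,...,f_r be real-analytic functions on ℝ^n and φ real-analytic. If there exist continuous functions φ_1,...,φ_r on ℝ^n with ∑_i φ_i f_i = φ, then there exist functions φ_1^#,...,φ_r^# on ℝ^n, continuous on ℝ^n and real-analytic on the open set Ω = {x : f_i(x) ≠ 0 for some i}, such that ∑_i φ_i^# f_i = φ. -/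
/-!
On `Ω` the correction `ψᵢ = Gᵢ - (∑ⱼ Gⱼ fⱼ - φ) fᵢ / ∑ⱼ fⱼ²` solves `∑ ψᵢ fᵢ = φ` whatever the `Gⱼ`,
and `|ψᵢ - Gᵢ| ≤ ∑ⱼ |Gⱼ - φ'ⱼ|`. So `ψ` is a solution as wanted once every `Gⱼ` is continuous,
analytic on `Ω` and equal to `φ'ⱼ` on the common zero set `Z` of the `fⱼ`.

Such a `G` replaces the paper's fine analytic approximation. Let `u = (1 + ∑ⱼ fⱼ²)⁻¹`, analytic,
`< 1` on `Ω` and `= 1` on `Z`. By Stone–Weierstrass pick exponential polynomials `Qₘ` (sums of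
`c exp ⟪a, x⟫`) with `|Qₘ - φ'ⱼ| < 2⁻ᵐ⁻¹` on the ball of radius `m`, and put
`G = Q₀ + ∑ₘ (Qₘ₊₁ - Qₘ) u^{Nₘ}`. On `Z` the series telescopes to `φ'ⱼ`, and it converges locally
uniformly. Where `u < 1`, exponents `Nₘ` growing fast enough against the size of `Qₘ₊₁ - Qₘ` make
`∑ₘ (Qₘ₊₁ - Qₘ)(x) wᴺᵐ` a convergent power series in `(x, w)` around `(x, u x)`, and `G` is
analytic there.
-/

open scoped RealInnerProductSpace NNReal ENNReal
open Real Set Filter Topology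

noncomputable section

lemma Finset.prod_range_ite_lt {M : Type*} [CommMonoid M] (A B : M) {N j : ℕ} (h : N ≤ j) :
    ∏ i ∈ Finset.range j, (if i < N then A else B) = A ^ N * B ^ (j - N) := by
  rw [← Finset.prod_range_mul_prod_Ico _ h,
    Finset.prod_congr rfl fun i hi => if_pos (Finset.mem_range.1 hi),
    Finset.prod_congr rfl fun i hi => if_neg (not_lt.2 (Finset.mem_Ico.1 hi).1),
    Finset.prod_const, Finset.prod_const, Finset.card_range, Nat.card_Ico]

lemma Finsupp.hasSum_sum {α M β : Type*} [Zero M] [AddCommMonoid β] [TopologicalSpace β]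
    (P : α →₀ M) {f : α → M → β} (hf : ∀ a, f a 0 = 0) : HasSum (fun a => f a (P a)) (P.sum f) :=
  hasSum_sum_of_ne_finset_zero fun a ha => by rw [Finsupp.notMem_support_iff.1 ha, hf]

lemma hasSum_sub_of_tendsto {f : ℕ → ℝ} {l : ℝ} (hs : Summable fun m => f (m + 1) - f m)
    (hf : Tendsto f atTop (𝓝 l)) : HasSum (fun m => f (m + 1) - f m) (l - f 0) :=
  hs.hasSum_iff_tendsto_nat.2 <| by simpa only [Finset.sum_range_sub] using hf.sub_const (f 0)

section ExpPoly

variable {E : Type*} [NormedAddCommGroup E]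

def expPolyMajorant (P : AddMonoidAlgebra ℝ E) (R : ℝ) : ℝ :=
  P.coeff.sum fun a c => |c| * exp (‖a‖ * R)

lemma expPolyMajorant_nonneg (P : AddMonoidAlgebra ℝ E) (R : ℝ) : 0 ≤ expPolyMajorant P R :=
  Finset.sum_nonneg fun _ _ => by positivity

lemma expPolyMajorant_mono (P : AddMonoidAlgebra ℝ E) : Monotone (expPolyMajorant P) :=
  fun _ _ h => Finset.sum_le_sum fun a _ => by dsimp only; gcongr

lemma summable_coeff_mul_exp_mul_pow (D : ℕ → AddMonoidAlgebra ℝ E) (N : ℕ → ℕ) {R t : ℝ}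
    (ht : 0 ≤ t) (hD : Summable fun m => t ^ N m * expPolyMajorant (D m) R) :
    Summable fun p : ℕ × E => |(D p.1).coeff p.2| * exp (‖p.2‖ * R) * t ^ N p.1 := by
  have hfib : ∀ m, HasSum (fun a => |(D m).coeff a| * exp (‖a‖ * R) * t ^ N m)
      (t ^ N m * expPolyMajorant (D m) R) := fun m => by
    rw [expPolyMajorant, Finsupp.sum, Finset.mul_sum]
    simp only [mul_comm (t ^ N m)]
    exact (D m).coeff.hasSum_sum (f := fun a x => |x| * exp (‖a‖ * R) * t ^ N m)
      fun a => by simp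
  refine (summable_prod_of_nonneg fun _ => by positivity).2 ⟨fun m => (hfib m).summable, ?_⟩
  simpa only [(hfib _).tsum_eq] using hD

variable [InnerProductSpace ℝ E]

def expInnerChar : Multiplicative E →* C(E, ℝ) where
  toFun a := ⟨fun x => exp ⟪a.toAdd, x⟫, by fun_prop⟩
  map_one' := by ext; simp
  map_mul' a b := by ext; simp [inner_add_left, exp_add]

/-- Exponential polynomials `x ↦ ∑ₐ cₐ exp ⟪a, x⟫`, `cₐ` being the coefficient of `a`. -/
def expPoly : AddMonoidAlgebra ℝ E →ₐ[ℝ] C(E, ℝ) :=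
  AddMonoidAlgebra.lift ℝ C(E, ℝ) E expInnerChar

lemma expPoly_apply (P : AddMonoidAlgebra ℝ E) (x : E) :
    expPoly P x = P.coeff.sum fun a c => c * exp ⟪a, x⟫ := by
  simp [expPoly, AddMonoidAlgebra.lift_apply, Finsupp.sum, expInnerChar]

lemma abs_expPoly_le (P : AddMonoidAlgebra ℝ E) {x : E} {R : ℝ} (hx : ‖x‖ ≤ R) :
    |expPoly P x| ≤ expPolyMajorant P R := by
  rw [expPoly_apply]
  refine (Finset.abs_sum_le_sum_abs _ _).trans (Finset.sum_le_sum fun a _ => ?_)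
  dsimp only
  rw [abs_mul, abs_of_pos (exp_pos _)]
  gcongr
  exact (real_inner_le_norm a x).trans (by gcongr)

lemma analyticAt_expPoly (P : AddMonoidAlgebra ℝ E) (x : E) : AnalyticAt ℝ (expPoly P) x := by
  have : ⇑(expPoly P) = fun y => ∑ a ∈ P.coeff.support, P.coeff a * exp ⟪a, y⟫ :=
    funext (expPoly_apply P)
  rw [this]
  exact Finset.analyticAt_fun_sum _ fun a _ =>
    analyticAt_const.mul ((innerSL ℝ a).analyticAt x).rexp'

theorem exists_expPoly_near [ProperSpace E] (g : C(E, ℝ)) (R : ℝ) {ε : ℝ} (hε : 0 < ε) :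
    ∃ P : AddMonoidAlgebra ℝ E, ∀ x, ‖x‖ ≤ R → |expPoly P x - g x| < ε := by
  have hsep : (expPoly (E := E)).range.SeparatesPoints := by
    intro x y hxy
    refine ⟨_, ⟨_, ⟨AddMonoidAlgebra.single (x - y) 1, rfl⟩, rfl⟩, fun h => hxy ?_⟩
    have h' : ⟪x - y, x⟫ = ⟪x - y, y⟫ := by simpa [expPoly_apply] using h
    rw [← sub_eq_zero, ← inner_self_eq_zero (𝕜 := ℝ), inner_sub_right, h', sub_self]
  obtain ⟨_, ⟨P, rfl⟩, hP⟩ :=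
    ContinuousMap.exists_mem_subalgebra_near_continuous_of_isCompact_of_separatesPoints
      hsep g (isCompact_closedBall (0 : E) R) hε
  exact ⟨P, fun x hx => by simpa using hP x (by simpa using hx)⟩

end ExpPoly

theorem hasFPowerSeriesOnBall_tsum {𝕜 E F ι : Type*} [NontriviallyNormedField 𝕜]
    [NormedAddCommGroup E] [NormedSpace 𝕜 E] [NormedAddCommGroup F] [NormedSpace 𝕜 F]
    [CompleteSpace F] {g : ι → E → F} {q : ι → FormalMultilinearSeries 𝕜 E F} {c : E}
    {r : ℝ≥0} (hr : 0 < r) (hg : ∀ i, HasFPowerSeriesOnBall (g i) (q i) c r) {B : ι → ℝ}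
    (hB : ∀ i j, ‖q i j‖ * r ^ j ≤ B i) (hBs : Summable B) :
    HasFPowerSeriesOnBall (fun z => ∑' i, g i z) (fun j => ∑' i, q i j) c r := by
  have hr' : (0 : ℝ) < r := hr
  have hq : ∀ i j, ‖q i j‖ ≤ B i / r ^ j := fun i j =>
    (le_div_iff₀ (pow_pos hr' j)).2 (hB i j)
  have hqs : ∀ j, Summable fun i => ‖q i j‖ := fun j =>
    .of_nonneg_of_le (fun _ => norm_nonneg _) (hq · j) (hBs.div_const _)
  refine ⟨?_, by simpa using hr, fun {y} hy => ?_⟩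
  · refine FormalMultilinearSeries.le_radius_of_bound _ (∑' i, B i) fun j => ?_
    calc ‖∑' i, q i j‖ * r ^ j ≤ (∑' i, ‖q i j‖) * r ^ j := by
          gcongr; exact norm_tsum_le_tsum_norm (hqs j)
      _ = ∑' i, ‖q i j‖ * r ^ j := (hqs j).tsum_mul_right _ |>.symm
      _ ≤ ∑' i, B i := (hqs j).mul_right _ |>.tsum_le_tsum (hB · j) hBs
  · have hy' : ‖y‖ < r := by simpa [edist_zero_right, ← ofReal_norm] using hy
    set ρ := ‖y‖ / r
    have hρ : ρ < 1 := (div_lt_one hr').2 hy'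
    set u : ι × ℕ → F := fun p => q p.1 p.2 fun _ => y
    have hB0 : ∀ i, 0 ≤ B i := fun i => (by positivity : (0 : ℝ) ≤ ‖q i 0‖ * r ^ 0).trans (hB i 0)
    have hu : Summable u := by
      refine .of_norm_bounded (hBs.mul_of_nonneg (summable_geometric_of_lt_one (by positivity) hρ)
        hB0 fun j => by positivity) fun ⟨i, j⟩ => ?_
      calc ‖q i j fun _ => y‖ ≤ ‖q i j‖ * ‖y‖ ^ j := by
            simpa using (q i j).le_opNorm fun _ => y
        _ ≤ B i / r ^ j * ‖y‖ ^ j := by gcongr; exact hq i j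
        _ = B i * ρ ^ j := by rw [div_pow]; ring
    have hrows : ∀ i, HasSum (fun j => u (i, j)) (g i (c + y)) := fun i =>
      (hg i).hasSum (by simpa [edist_zero_right, ← ofReal_norm] using hy')
    have hcols : ∀ j, HasSum (fun i => u (i, j)) ((∑' i, q i j) fun _ => y) := fun j =>
      (ContinuousMultilinearMap.apply 𝕜 _ F fun _ => y).hasSum
        (Summable.of_norm (hqs j)).hasSum
    rw [(hu.hasSum.prod_fiberwise hrows).tsum_eq, ← (Equiv.prodComm ℕ ι).tsum_eq]
    exact hu.prod_symm.hasSum.prod_fiberwise hcols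

section Analyticity

variable {E : Type*} [NormedAddCommGroup E] [InnerProductSpace ℝ E]

/-- `(v₁, …, vⱼ) ↦ ∏_{i < N} (vᵢ).2 * ∏_{N ≤ i < j} ⟪a, (vᵢ).1⟫` -/
def sndInnerMonomial (a : E) (N j : ℕ) :
    ContinuousMultilinearMap ℝ (fun _ : Fin j => E × ℝ) ℝ :=
  (ContinuousMultilinearMap.mkPiAlgebraFin ℝ j ℝ).compContinuousLinearMap fun i =>
    if (i : ℕ) < N then .snd ℝ E ℝ else (innerSL ℝ a).comp (.fst ℝ E ℝ)

lemma sndInnerMonomial_apply_diag (a : E) {N j : ℕ} (h : N ≤ j) (y : E × ℝ) :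
    sndInnerMonomial a N j (fun _ => y) = y.2 ^ N * ⟪a, y.1⟫ ^ (j - N) := by
  rw [sndInnerMonomial, ContinuousMultilinearMap.compContinuousLinearMap_apply,
    ContinuousMultilinearMap.mkPiAlgebraFin_apply, List.prod_ofFn, ← Finset.prod_range_ite_lt _ _ h,
    ← Fin.prod_univ_eq_prod_range]
  exact Finset.prod_congr rfl fun i _ => by split_ifs <;> simp

lemma norm_sndInnerMonomial_le (a : E) {N j : ℕ} (h : N ≤ j) :
    ‖sndInnerMonomial a N j‖ ≤ ‖a‖ ^ (j - N) := by
  refine (ContinuousMultilinearMap.norm_compContinuousLinearMap_le _ _).trans ?_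
  rw [ContinuousMultilinearMap.norm_mkPiAlgebraFin, one_mul]
  calc _ ≤ ∏ i : Fin j, if (i : ℕ) < N then (1 : ℝ) else ‖a‖ := by
        refine Finset.prod_le_prod (fun _ _ => norm_nonneg _) fun i _ => ?_
        split_ifs
        · exact ContinuousLinearMap.norm_snd_le ℝ E ℝ
        · exact (ContinuousLinearMap.opNorm_comp_le _ _).trans <| by
            simpa using mul_le_mul_of_nonneg_left (ContinuousLinearMap.norm_fst_le ℝ E ℝ)
              (norm_nonneg a)
    _ = ‖a‖ ^ (j - N) := by
        rw [Fin.prod_univ_eq_prod_range (fun i => if i < N then (1 : ℝ) else ‖a‖),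
          Finset.prod_range_ite_lt _ _ h, one_pow, one_mul]

def expInnerMulPowSeries (a : E) (N : ℕ) (x₀ : E) : FormalMultilinearSeries ℝ (E × ℝ) ℝ :=
  fun j => if N ≤ j then (exp ⟪a, x₀⟫ / (j - N).factorial) • sndInnerMonomial a N j else 0

lemma norm_expInnerMulPowSeries_mul_pow_le (a : E) (N : ℕ) (x₀ : E) {r : ℝ} (hr : 0 ≤ r)
    (j : ℕ) : ‖expInnerMulPowSeries a N x₀ j‖ * r ^ j ≤ exp (‖a‖ * (‖x₀‖ + r)) * r ^ N := by
  rw [expInnerMulPowSeries]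
  split_ifs with h
  · obtain ⟨k, rfl⟩ := Nat.exists_eq_add_of_le h
    have hM := norm_sndInnerMonomial_le a h
    rw [Nat.add_sub_cancel_left] at hM ⊢
    have hx := real_inner_le_norm a x₀
    calc ‖(exp ⟪a, x₀⟫ / k.factorial) • sndInnerMonomial a N (N + k)‖ * r ^ (N + k)
        ≤ exp ⟪a, x₀⟫ / k.factorial * ‖a‖ ^ k * (r ^ N * r ^ k) := by
          rw [← pow_add]
          gcongr
          refine (norm_smul_le (exp ⟪a, x₀⟫ / k.factorial : ℝ)
            (sndInnerMonomial a N (N + k))).trans ?_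
          rw [norm_of_nonneg (by positivity)]
          gcongr
      _ = exp ⟪a, x₀⟫ * ((‖a‖ * r) ^ k / k.factorial) * r ^ N := by ring
      _ ≤ exp (‖a‖ * ‖x₀‖) * exp (‖a‖ * r) * r ^ N := by
          gcongr; exact Real.pow_div_factorial_le_exp _ (by positivity) k
      _ = exp (‖a‖ * (‖x₀‖ + r)) * r ^ N := by rw [mul_add, exp_add]
  · rw [ContinuousMultilinearMap.opNorm_zero, zero_mul]
    positivity

lemma hasFPowerSeriesOnBall_expInnerMulPow (a : E) (N : ℕ) (x₀ : E) {r : ℝ≥0} (hr : 0 < r) :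
    HasFPowerSeriesOnBall (fun z : E × ℝ => exp ⟪a, z.1⟫ * z.2 ^ N)
      (expInnerMulPowSeries a N x₀) (x₀, 0) r := by
  refine ⟨FormalMultilinearSeries.le_radius_of_bound _ (exp (‖a‖ * (‖x₀‖ + r)) * r ^ N)
    (norm_expInnerMulPowSeries_mul_pow_le a N x₀ r.2), by simpa using hr, fun {y} _ => ?_⟩
  have hexp : HasSum (fun k => ⟪a, y.1⟫ ^ k / k.factorial) (exp ⟪a, y.1⟫) := by
    simpa [← exp_eq_exp_ℝ] using NormedSpace.expSeries_div_hasSum_exp ⟪a, y.1⟫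
  have hshift : (fun k => expInnerMulPowSeries a N x₀ (k + N) fun _ => y)
      = fun k => exp ⟪a, x₀⟫ * y.2 ^ N * (⟪a, y.1⟫ ^ k / k.factorial) := by
    ext k
    simp only [expInnerMulPowSeries, Nat.le_add_left, if_true, smul_apply,
      sndInnerMonomial_apply_diag a (Nat.le_add_left N k), Nat.add_sub_cancel, smul_eq_mul]
    ring
  have hlow : ∑ i ∈ Finset.range N, expInnerMulPowSeries a N x₀ i (fun _ => y) = 0 :=
    Finset.sum_eq_zero fun i hi => by
      simp [expInnerMulPowSeries, not_le.2 (Finset.mem_range.1 hi)]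
  have hvalue : exp ⟪a, ((x₀, 0) + y).1⟫ * ((x₀, 0) + y).2 ^ N
      = exp ⟪a, x₀⟫ * y.2 ^ N * exp ⟪a, y.1⟫ := by
    simp only [Prod.fst_add, Prod.snd_add, inner_add_right, exp_add, zero_add]
    ring
  rw [← hasSum_nat_add_iff' N, hshift, hlow, sub_zero, hvalue]
  exact hexp.mul_left _

lemma tsum_expPoly_mul_pow_eq_tsum_prod (D : ℕ → AddMonoidAlgebra ℝ E) (N : ℕ → ℕ)
    {z : E × ℝ}
    (hz : Summable fun p : ℕ × E => |(D p.1).coeff p.2| * exp (‖p.2‖ * ‖z.1‖) * |z.2| ^ N p.1) :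
    ∑' m, expPoly (D m) z.1 * z.2 ^ N m
      = ∑' p : ℕ × E, (D p.1).coeff p.2 * (exp ⟪p.2, z.1⟫ * z.2 ^ N p.1) := by
  have hfib : ∀ m, HasSum (fun a => (D m).coeff a * (exp ⟪a, z.1⟫ * z.2 ^ N m))
      (expPoly (D m) z.1 * z.2 ^ N m) := fun m => by
    rw [expPoly_apply, Finsupp.sum, Finset.sum_mul]
    simp only [mul_assoc]
    exact (D m).coeff.hasSum_sum (f := fun a x => x * (exp ⟪a, z.1⟫ * z.2 ^ N m))
      fun a => zero_mul _
  have hs : Summable fun p : ℕ × E => (D p.1).coeff p.2 * (exp ⟪p.2, z.1⟫ * z.2 ^ N p.1) := by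
    refine hz.of_norm_bounded fun p => ?_
    simp only [norm_mul, norm_pow, Real.norm_eq_abs, abs_of_pos (exp_pos _), ← mul_assoc]
    gcongr
    exact real_inner_le_norm _ _
  rw [hs.tsum_prod' fun m => (hfib m).summable]
  exact tsum_congr fun m => (hfib m).tsum_eq.symm

theorem analyticAt_tsum_expPoly_mul_pow (D : ℕ → AddMonoidAlgebra ℝ E) (N : ℕ → ℕ)
    (hD : ∀ R t, 0 ≤ t → t < 1 → Summable fun m => t ^ N m * expPolyMajorant (D m) R)
    (x₀ : E) {θ : ℝ} (hθ : |θ| < 1) :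
    AnalyticAt ℝ (fun z : E × ℝ => ∑' m, expPoly (D m) z.1 * z.2 ^ N m) (x₀, θ) := by
  set c : ℕ × E → ℝ := fun p => (D p.1).coeff p.2
  set r : ℝ≥0 := ⟨(1 + |θ|) / 2, by positivity⟩
  have hr0 : 0 < r := NNReal.coe_pos.1 (show 0 < (1 + |θ|) / 2 by positivity)
  have hr1 : (r : ℝ) < 1 := show (1 + |θ|) / 2 < 1 by linarith
  have hθr : |θ| < r := show |θ| < (1 + |θ|) / 2 by linarith
  have hps := hasFPowerSeriesOnBall_tsum hr0
    (fun p => (hasFPowerSeriesOnBall_expInnerMulPow p.2 (N p.1) x₀ hr0).const_smul (c := c p))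
    (B := fun p => |c p| * exp (‖p.2‖ * (‖x₀‖ + r)) * r ^ N p.1) (fun p j => ?_)
    (summable_coeff_mul_exp_mul_pow D N r.2 (hD _ r r.2 hr1))
  · refine (hps.analyticAt_of_mem ?_).congr ?_
    · rw [Metric.eball_coe, Metric.mem_ball, Prod.dist_eq, dist_self, Real.dist_eq, sub_zero,
        max_eq_right (abs_nonneg θ)]
      exact hθr
    · filter_upwards [(isOpen_lt continuous_snd.abs continuous_const).mem_nhds
        (show (x₀, θ) ∈ {z : E × ℝ | |z.2| < 1} from hθ)] with z hz
      exact (tsum_expPoly_mul_pow_eq_tsum_prod D N (summable_coeff_mul_exp_mul_pow D N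
        (abs_nonneg _) (hD _ _ (abs_nonneg _) hz))).symm
  · calc ‖c p • expInnerMulPowSeries p.2 (N p.1) x₀ j‖ * r ^ j
        ≤ |c p| * (‖expInnerMulPowSeries p.2 (N p.1) x₀ j‖ * r ^ j) := by
          rw [← mul_assoc, ← Real.norm_eq_abs]
          gcongr
          exact norm_smul_le (c p) (expInnerMulPowSeries p.2 (N p.1) x₀ j)
      _ ≤ |c p| * (exp (‖p.2‖ * (‖x₀‖ + r)) * r ^ N p.1) :=
          mul_le_mul_of_nonneg_left
            (norm_expInnerMulPowSeries_mul_pow_le p.2 (N p.1) x₀ r.2 j) (abs_nonneg _)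
      _ = _ := by ring

end Analyticity

def dampingExponent (W : ℕ → ℝ → ℝ) (m : ℕ) : ℕ := m * (1 + ⌈W m m⌉₊)

lemma summable_pow_dampingExponent_mul {W : ℕ → ℝ → ℝ} (hW0 : ∀ m R, 0 ≤ W m R)
    (hW : ∀ m, Monotone (W m)) {s : ℝ} (hs0 : 0 ≤ s) (hs1 : s < 1) (R : ℝ) :
    Summable fun m => s ^ dampingExponent W m * W m R := by
  obtain ⟨m₁, hm₁⟩ := exists_pow_lt_of_lt_one (by norm_num : (0 : ℝ) < 1 / 2) hs1
  refine .of_norm_bounded_eventually_nat (summable_geometric_of_lt_one hs0 hs1) ?_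
  filter_upwards [eventually_ge_atTop (max m₁ ⌈R⌉₊)] with m hm
  set K := ⌈W m m⌉₊
  have hsm : s ^ m ≤ 1 / 2 :=
    (pow_le_pow_of_le_one hs0 hs1.le (le_of_max_le_left hm)).trans hm₁.le
  have hWK : W m R ≤ 2 ^ K := calc
    W m R ≤ W m m := hW m ((Nat.le_ceil R).trans (by exact_mod_cast le_of_max_le_right hm))
    _ ≤ K := Nat.le_ceil _
    _ ≤ 2 ^ K := by exact_mod_cast Nat.lt_two_pow_self.le
  rw [Real.norm_eq_abs, abs_of_nonneg (by have := hW0 m R; positivity)]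
  calc s ^ dampingExponent W m * W m R = s ^ m * ((s ^ m) ^ K * W m R) := by
        rw [dampingExponent, mul_add, mul_one, pow_add, pow_mul, mul_assoc]
    _ ≤ s ^ m * ((1 / 2) ^ K * 2 ^ K) := by gcongr; exact hW0 m R
    _ = s ^ m := by rw [← mul_pow]; norm_num

section Glue

variable {E : Type*} [NormedAddCommGroup E] [InnerProductSpace ℝ E]

lemma continuous_tsum_expPoly_mul_pow (D : ℕ → AddMonoidAlgebra ℝ E) (N : ℕ → ℕ)
    (hD : ∀ (m : ℕ) x, ‖x‖ ≤ m → |expPoly (D m) x| ≤ (1 / 2) ^ m) {u : E → ℝ} (hu : Continuous u)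
    (hu1 : ∀ x, |u x| ≤ 1) : Continuous fun x => ∑' m, expPoly (D m) x * u x ^ N m := by
  refine continuous_iff_continuousAt.2 fun x₀ => ?_
  set M : ℕ := ⌈‖x₀‖⌉₊ + 1
  set b : ℕ → ℝ := fun m => if m < M then expPolyMajorant (D m) M else (1 / 2) ^ m
  have hb : Summable b := by
    refine .of_norm_bounded_eventually_nat summable_geometric_two ?_
    filter_upwards [eventually_ge_atTop M] with m hm
    simp [b, not_lt.2 hm]
  have hterm : ∀ m, ∀ x ∈ Metric.ball (0 : E) M, ‖expPoly (D m) x * u x ^ N m‖ ≤ b m := by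
    intro m x hx
    rw [mem_ball_zero_iff] at hx
    rw [norm_mul, norm_pow, Real.norm_eq_abs, Real.norm_eq_abs]
    refine (mul_le_of_le_one_right (abs_nonneg _) (pow_le_one₀ (abs_nonneg _) (hu1 x))).trans ?_
    simp only [b]
    split_ifs with hm
    · exact abs_expPoly_le _ hx.le
    · exact hD m x (hx.le.trans (by exact_mod_cast not_lt.1 hm))
  refine (continuousOn_tsum (fun m => ((expPoly (D m)).continuous.mul (hu.pow _)).continuousOn)
    hb hterm).continuousAt (Metric.isOpen_ball.mem_nhds ?_)
  rw [mem_ball_zero_iff]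
  exact (Nat.le_ceil _).trans_lt (by simp [M])

theorem exists_continuous_analyticAt_eq_of_eq_one [ProperSpace E] {u g : E → ℝ}
    (hu : ∀ x, AnalyticAt ℝ u x) (hu1 : ∀ x, |u x| ≤ 1) (hg : Continuous g) :
    ∃ G : E → ℝ, Continuous G ∧ (∀ x, |u x| < 1 → AnalyticAt ℝ G x) ∧
      ∀ x, u x = 1 → G x = g x := by
  choose Q hQ using fun m : ℕ =>
    exists_expPoly_near ⟨g, hg⟩ m (by positivity : (0 : ℝ) < (1 / 2) ^ (m + 1))
  set D : ℕ → AddMonoidAlgebra ℝ E := fun m => Q (m + 1) - Q m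
  have hD : ∀ (m : ℕ) x, ‖x‖ ≤ m → |expPoly (D m) x| ≤ (1 / 2) ^ m := by
    intro m x hx
    have h₁ := hQ (m + 1) x (hx.trans (by simp))
    have h₂ := hQ m x hx
    simp only [D, map_sub, ContinuousMap.sub_apply, ContinuousMap.coe_mk] at h₁ h₂ ⊢
    calc |expPoly (Q (m + 1)) x - expPoly (Q m) x|
        ≤ |expPoly (Q (m + 1)) x - g x| + |expPoly (Q m) x - g x| :=
          (abs_sub_le _ (g x) _).trans_eq (by rw [abs_sub_comm (g x)])
      _ ≤ (1 / 2) ^ m := by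
          have hgeom : (1 / 2 : ℝ) ^ (m + 1 + 1) + (1 / 2) ^ (m + 1) = 3 / 4 * (1 / 2) ^ m := by
            ring
          linarith [pow_nonneg (by norm_num : (0 : ℝ) ≤ 1 / 2) m]
  set N := dampingExponent fun m => expPolyMajorant (D m)
  refine ⟨fun x => expPoly (Q 0) x + ∑' m, expPoly (D m) x * u x ^ N m,
    (expPoly (Q 0)).continuous.add (continuous_tsum_expPoly_mul_pow D N hD
      (continuous_iff_continuousAt.2 fun x => (hu x).continuousAt) hu1),
    fun x hx => ?_, fun x hx => ?_⟩
  · refine (analyticAt_expPoly _ x).add ((analyticAt_tsum_expPoly_mul_pow D N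
      (fun R t ht0 ht1 => ?_) x hx).comp (f := fun y => (y, u y)) (analyticAt_id.prod (hu x)))
    exact summable_pow_dampingExponent_mul (fun m R => expPolyMajorant_nonneg _ R)
      (fun m => expPolyMajorant_mono _) ht0 ht1 R
  · have hle : ∀ᶠ m : ℕ in atTop, ‖x‖ ≤ m := by
      filter_upwards [eventually_ge_atTop ⌈‖x‖⌉₊] with m hm
      exact (Nat.le_ceil _).trans (by exact_mod_cast hm)
    have hQg : Tendsto (fun m => expPoly (Q m) x) atTop (𝓝 (g x)) := by
      rw [tendsto_iff_norm_sub_tendsto_zero]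
      refine squeeze_zero_norm' ?_ ((tendsto_pow_atTop_nhds_zero_of_lt_one
        (by norm_num) (by norm_num : (1 / 2 : ℝ) < 1)).comp (tendsto_add_atTop_nat 1))
      filter_upwards [hle] with m hm
      simpa using (hQ m x hm).le
    have hsum := hasSum_sub_of_tendsto (.of_norm_bounded_eventually_nat summable_geometric_two
      (by filter_upwards [hle] with m hm; simpa [D] using hD m x hm)) hQg
    simp [D, hx, hsum.tsum_eq]

theorem exists_continuous_analyticAt_eq_on_commonZeros [ProperSpace E] {ι : Type*} [Fintype ι]
    {f : ι → E → ℝ} (hf : ∀ j x, AnalyticAt ℝ (f j) x) {g : E → ℝ} (hg : Continuous g) :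
    ∃ G : E → ℝ, Continuous G ∧ (∀ x, (∃ j, f j x ≠ 0) → AnalyticAt ℝ G x) ∧
      ∀ x, (∀ j, f j x = 0) → G x = g x := by
  set σ := fun x => ∑ j, f j x * f j x
  have hσ : ∀ x, 0 ≤ σ x := fun x => Finset.sum_nonneg fun j _ => mul_self_nonneg _
  have hσan : ∀ x, AnalyticAt ℝ σ x := fun x => by
    have := fun j => hf j x
    fun_prop
  have hu : ∀ x, AnalyticAt ℝ (fun x => (1 + σ x)⁻¹) x := fun x =>
    (analyticAt_const.add (hσan x)).inv (by linarith [hσ x] : 0 < 1 + σ x).ne'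
  have hu1 : ∀ x, |(1 + σ x)⁻¹| ≤ 1 := fun x => by
    rw [abs_of_pos (by positivity [hσ x])]
    exact inv_le_one_of_one_le₀ (by linarith [hσ x])
  obtain ⟨G, hGc, hGan, hGeq⟩ := exists_continuous_analyticAt_eq_of_eq_one hu hu1 hg
  refine ⟨G, hGc, fun x ⟨j, hj⟩ => hGan x ?_, fun x hx => hGeq x (by simp [σ, hx])⟩
  have : 0 < σ x := (hσ x).lt_of_ne fun h =>
    hj ((Finset.sum_mul_self_eq_zero_iff _ _).1 h.symm j (Finset.mem_univ j))
  rw [abs_of_pos (by positivity)]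
  exact inv_lt_one_of_one_lt₀ (by linarith)

end Glue

lemma abs_sum_mul_mul_le {ι : Type*} [Fintype ι] (e v : ι → ℝ) (i : ι) :
    |(∑ j, e j * v j) * v i| ≤ (∑ j, |e j|) * ∑ j, v j * v j := by
  have hsq : ∀ k, v k * v k ≤ ∑ j, v j * v j := fun k =>
    Finset.single_le_sum (f := fun j => v j * v j) (fun j _ => mul_self_nonneg _)
      (Finset.mem_univ k)
  rw [Finset.sum_mul, Finset.sum_mul]
  refine (Finset.abs_sum_le_sum_abs _ _).trans (Finset.sum_le_sum fun j _ => ?_)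
  rw [abs_mul, abs_mul, mul_assoc]
  gcongr
  -- `|v j| |v i| ≤ (v j² + v i²) / 2`
  nlinarith [hsq i, hsq j, abs_mul_abs_self (v i), abs_mul_abs_self (v j),
    sq_nonneg (|v j| - |v i|)]

section Correction

variable {X ι : Type*} [Fintype ι]

/-- On the common zeros of the `fⱼ` this is `Gᵢ`, as `x / 0 = 0`. -/
def correctedSolution (f G : ι → X → ℝ) (φ : X → ℝ) (i : ι) (x : X) : ℝ :=
  G i x - (∑ j, G j x * f j x - φ x) * f i x / ∑ j, f j x * f j x

variable {f G φ' : ι → X → ℝ} {φ : X → ℝ}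

lemma sum_correctedSolution_mul {x : X} (hx : (∀ j, f j x = 0) → φ x = 0) :
    ∑ i, correctedSolution f G φ i x * f i x = φ x := by
  by_cases hσ : ∑ j, f j x * f j x = 0
  · have hf := (Finset.sum_mul_self_eq_zero_iff _ _).1 hσ
    simp [hx fun j => hf j (Finset.mem_univ j), hf]
  · set h := ∑ j, G j x * f j x - φ x
    calc ∑ i, correctedSolution f G φ i x * f i x
        = ∑ i, G i x * f i x - h / (∑ j, f j x * f j x) * ∑ i, f i x * f i x := by
          simp only [correctedSolution, sub_mul, Finset.sum_sub_distrib, Finset.mul_sum]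
          congr 1
          exact Finset.sum_congr rfl fun i _ => by ring
      _ = φ x := by rw [div_mul_cancel₀ _ hσ]; ring

lemma abs_correctedSolution_sub_le {x : X} (hx : ∑ j, φ' j x * f j x = φ x) (i : ι) :
    |correctedSolution f G φ i x - G i x| ≤ ∑ j, |G j x - φ' j x| := by
  have h : ∑ j, G j x * f j x - φ x = ∑ j, (G j x - φ' j x) * f j x := by
    simp only [← hx, sub_mul, Finset.sum_sub_distrib]
  rw [correctedSolution, sub_sub_cancel_left, abs_neg, h, abs_div,
    abs_of_nonneg (Finset.sum_nonneg fun j _ => mul_self_nonneg (f j x))]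
  exact div_le_of_le_mul₀ (Finset.sum_nonneg fun j _ => mul_self_nonneg _)
    (Finset.sum_nonneg fun j _ => abs_nonneg _) (abs_sum_mul_mul_le _ _ i)

lemma continuous_correctedSolution [TopologicalSpace X] (hf : ∀ j, Continuous (f j))
    (hG : ∀ j, Continuous (G j)) (hφ : Continuous φ) (hφ' : ∀ j, Continuous (φ' j))
    (hsol : ∀ x, ∑ j, φ' j x * f j x = φ x)
    (hGφ' : ∀ x, (∀ j, f j x = 0) → ∀ j, G j x = φ' j x) (i : ι) :
    Continuous (correctedSolution f G φ i) := by
  refine continuous_iff_continuousAt.2 fun x₀ => ?_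
  by_cases hσ : ∑ j, f j x₀ * f j x₀ = 0
  · have hf₀ := (Finset.sum_mul_self_eq_zero_iff _ _).1 hσ
    have hδ : Tendsto (fun x => ∑ j, |G j x - φ' j x|) (𝓝 x₀) (𝓝 0) := by
      simpa [hGφ' x₀ fun j => hf₀ j (Finset.mem_univ j)] using
        (continuous_finsetSum _ fun j _ => ((hG j).sub (hφ' j)).abs).tendsto x₀
    have hdiff : Tendsto (fun x => correctedSolution f G φ i x - G i x) (𝓝 x₀) (𝓝 0) :=
      squeeze_zero_norm (fun x => abs_correctedSolution_sub_le (hsol x) i) hδ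
    have hx₀ : correctedSolution f G φ i x₀ = G i x₀ := by simp [correctedSolution, hσ]
    simpa [ContinuousAt, hx₀] using hdiff.add ((hG i).tendsto x₀)
  · unfold correctedSolution
    fun_prop (disch := exact hσ)

lemma analyticAt_correctedSolution [NormedAddCommGroup X] [NormedSpace ℝ X] {x : X}
    (hf : ∀ j, AnalyticAt ℝ (f j) x) (hG : ∀ j, AnalyticAt ℝ (G j) x) (hφ : AnalyticAt ℝ φ x)
    (hx : ∃ j, f j x ≠ 0) (i : ι) : AnalyticAt ℝ (correctedSolution f G φ i) x := by
  obtain ⟨j, hj⟩ := hx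
  have hσ : ∑ j, f j x * f j x ≠ 0 := fun h =>
    hj ((Finset.sum_mul_self_eq_zero_iff _ _).1 h j (Finset.mem_univ j))
  unfold correctedSolution
  fun_prop (disch := exact hσ)

end Correction

end

/-- If `f₁,…,f_r, φ` are real-analytic on `ℝⁿ` and `φ = ∑ i φᵢ fᵢ` has a continuous
solution, then it has a solution which is continuous on `ℝⁿ` and real-analytic on
the open set `Ω = {x : some f i x ≠ 0}`. -/
theorem statement13 (n r : ℕ) (f : Fin r → EuclideanSpace ℝ (Fin n) → ℝ)
    (φ : EuclideanSpace ℝ (Fin n) → ℝ)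
    (hf : ∀ i, AnalyticOnNhd ℝ (f i) Set.univ) (hφ : AnalyticOnNhd ℝ φ Set.univ)
    (hsol : ∃ φ' : Fin r → EuclideanSpace ℝ (Fin n) → ℝ,
      (∀ i, Continuous (φ' i)) ∧ ∀ x, ∑ i, φ' i x * f i x = φ x) :
    ∃ ψ : Fin r → EuclideanSpace ℝ (Fin n) → ℝ,
      (∀ i, Continuous (ψ i)) ∧
      (∀ i, AnalyticOnNhd ℝ (ψ i) {x | ∃ j, f j x ≠ 0}) ∧
      (∀ x, ∑ i, ψ i x * f i x = φ x) := by
  obtain ⟨φ', hφ', hsum⟩ := hsol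
  choose G hGc hGan hGeq using fun i =>
    exists_continuous_analyticAt_eq_on_commonZeros (fun j x => hf j x trivial) (hφ' i)
  exact ⟨correctedSolution f G φ,
    continuous_correctedSolution (fun j => continuousOn_univ.1 (hf j).continuousOn) hGc
      (continuousOn_univ.1 hφ.continuousOn) hφ' hsum fun x hx j => hGeq j x hx,
    fun i x hx => analyticAt_correctedSolution (fun j => hf j x trivial)
      (fun j => hGan j x hx) (hφ x trivial) hx i,
    fun x => sum_correctedSolution_mul fun hx => by simp [← hsum x, hx]⟩
end

section
/- On the interval [−1/2, 1/2] ⊂ ℝ, let f(x) = x^n and φ(x) = x^n/log|x| (with φ(0) = 0). Then φ is of class C^n, the function ψ(x) = 1/log|x| (ψ(0)=0) is continuous and satisfies φ = ψ·f, but there is no Hölder continuous function ψ' on [−1/2,1/2] with φ = ψ'·f; indeed ψ is the unique continuous solution and ψ is not Hölder continuous at 0 for any exponent α > 0. -/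
/-!
Because `Real.log 0 = 0`, `0⁻¹ = 0` and `Real.log |x| = Real.log x`, the function `ψ` is
`x ↦ (log x)⁻¹` on all of `ℝ`. Away from `0` the derivative of `x ^ (m + 1) * (log x)⁻¹ ^ j` is
`(m + 1) * x ^ m * (log x)⁻¹ ^ j - j * x ^ m * (log x)⁻¹ ^ (j + 1)`, and this formula persists at
`0` because the difference quotient there is `x ^ m * (log x)⁻¹ ^ j → 0`; induction on `m`, over
all `j ≥ 1` at once, gives `x ^ n * (log x)⁻¹ ^ j ∈ Cⁿ` on `(-1, 1)`.
Any continuous `ψ'` with `φ = ψ' · f` equals `ψ` off `0`, hence everywhere by density.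
Finally `(log x)⁻¹ = O(x ^ α)` at `0⁺` would give `1 = (log x)⁻¹ * log x = O(x ^ α * log x) = o(1)`.
-/

open Set Filter Real Topology Asymptotics

theorem hasDerivAt_id_mul_zero_of_tendsto {𝕜 : Type*} [NontriviallyNormedField 𝕜] {g : 𝕜 → 𝕜}
    (hg : Tendsto g (𝓝 0) (𝓝 0)) : HasDerivAt (fun x => x * g x) 0 0 := by
  rw [hasDerivAt_iff_isLittleO_nhds_zero]
  simpa using (isBigO_refl (fun h : 𝕜 => h) (𝓝 0)).mul_isLittleO ((isLittleO_one_iff 𝕜).mpr hg)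

theorem continuousAt_inv_log_zero : ContinuousAt (fun x : ℝ => (log x)⁻¹) 0 := by
  rw [← continuousWithinAt_compl_self, ContinuousWithinAt]
  simpa [Function.comp_def] using tendsto_inv_atBot_zero.comp tendsto_log_nhdsNE_zero

theorem continuousOn_inv_log : ContinuousOn (fun x : ℝ => (log x)⁻¹) (Ioo (-1) 1) := by
  intro x hx
  rcases eq_or_ne x 0 with rfl | hx0
  · exact continuousAt_inv_log_zero.continuousWithinAt
  · exact ((continuousAt_log hx0).inv₀
      (log_ne_zero.mpr ⟨hx0, hx.2.ne, hx.1.ne'⟩)).continuousWithinAt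

theorem hasDerivAt_inv_log_pow (j : ℕ) {x : ℝ} (hx : x ≠ 0) (hlx : log x ≠ 0) :
    HasDerivAt (fun y => (log y)⁻¹ ^ j) (-j * (log x)⁻¹ ^ (j + 1) / x) x := by
  rcases j with _ | k
  · simpa using hasDerivAt_const x (1 : ℝ)
  · refine (((hasDerivAt_log hx).fun_inv hlx).fun_pow (k + 1)).congr_deriv ?_
    rw [add_tsub_cancel_right, pow_add _ k 2, inv_pow _ 2]
    ring

theorem hasDerivAt_pow_succ_mul_inv_log_pow (m : ℕ) {j : ℕ} (hj : j ≠ 0) {x : ℝ}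
    (hx : x ∈ Ioo (-1) 1) :
    HasDerivAt (fun y => y ^ (m + 1) * (log y)⁻¹ ^ j)
      ((m + 1) * (x ^ m * (log x)⁻¹ ^ j) - j * (x ^ m * (log x)⁻¹ ^ (j + 1))) x := by
  rcases eq_or_ne x 0 with rfl | hx0
  · have hg : Tendsto (fun y : ℝ => y ^ m * (log y)⁻¹ ^ j) (𝓝 0) (𝓝 0) := by
      simpa [hj] using (tendsto_id.pow m).mul (continuousAt_inv_log_zero.tendsto.pow j)
    have hfun : (fun y : ℝ => y ^ (m + 1) * (log y)⁻¹ ^ j) =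
        fun y => y * (y ^ m * (log y)⁻¹ ^ j) := by
      ext y; ring
    rw [hfun]
    refine (hasDerivAt_id_mul_zero_of_tendsto hg).congr_deriv ?_
    simp [hj]
  · refine ((hasDerivAt_pow (m + 1) x).fun_mul
      (hasDerivAt_inv_log_pow j hx0 (log_ne_zero.mpr ⟨hx0, hx.2.ne, hx.1.ne'⟩))).congr_deriv ?_
    rw [add_tsub_cancel_right, pow_succ x m]
    field_simp
    push_cast
    ring

theorem contDiffOn_pow_mul_inv_log_pow (n : ℕ) {j : ℕ} (hj : j ≠ 0) :
    ContDiffOn ℝ n (fun x => x ^ n * (log x)⁻¹ ^ j) (Ioo (-1) 1) := by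
  induction n generalizing j with
  | zero =>
    simpa using continuousOn_inv_log.fun_pow j
  | succ m ih =>
    rw [Nat.cast_succ, contDiffOn_succ_iff_deriv_of_isOpen isOpen_Ioo]
    have hderiv := fun x (hx : x ∈ Ioo (-1 : ℝ) 1) => hasDerivAt_pow_succ_mul_inv_log_pow m hj hx
    refine ⟨fun x hx => (hderiv x hx).differentiableAt.differentiableWithinAt, by simp, ?_⟩
    exact ((contDiffOn_const.mul (ih hj)).sub (contDiffOn_const.mul (ih j.succ_ne_zero))).congr
      fun x hx => (hderiv x hx).deriv

theorem Icc_subset_closure_diff_singleton_zero {a b : ℝ} (hb : 0 < b) :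
    Icc a b ⊆ closure (Icc a b \ {0}) := by
  intro x hx
  rcases eq_or_ne x 0 with rfl | hx0
  · have hsub : Ioc 0 b ⊆ Icc a b \ {0} := fun y hy => ⟨⟨hx.1.trans hy.1.le, hy.2⟩, hy.1.ne'⟩
    refine closure_mono hsub ?_
    rw [closure_Ioc hb.ne]
    exact ⟨le_rfl, hb.le⟩
  · exact subset_closure ⟨hx, hx0⟩

theorem eqOn_of_mul_pow_eqOn {K : Type*} [Field K] [TopologicalSpace K] [T2Space K]
    {f g : K → K} {s : Set K} (n : ℕ) (hf : ContinuousOn f s) (hg : ContinuousOn g s)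
    (hs : s ⊆ closure (s \ {0})) (h : ∀ x ∈ s, f x * x ^ n = g x * x ^ n) : EqOn f g s :=
  EqOn.of_subset_closure (fun x hx => mul_right_cancel₀ (pow_ne_zero n hx.2) (h x hx.1))
    hf hg sdiff_subset hs

theorem not_isBigO_inv_log_rpow {α : ℝ} (hα : 0 < α) :
    ¬ (fun x => (log x)⁻¹) =O[𝓝[>] 0] fun x => x ^ α := by
  intro h
  have hsmall : (fun x => x ^ α * log x) =o[𝓝[>] 0] fun _ => (1 : ℝ) :=
    (isLittleO_one_iff ℝ).mpr (by simpa only [mul_comm] using tendsto_log_mul_rpow_nhdsGT_zero hα)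
  have hone : (fun x => (log x)⁻¹ * log x) =ᶠ[𝓝[>] 0] fun _ => (1 : ℝ) := by
    filter_upwards [Ioo_mem_nhdsGT one_pos] with x hx
    exact inv_mul_cancel₀ (log_neg hx.1 hx.2).ne
  exact isLittleO_irrefl (Frequently.of_forall fun _ => one_ne_zero)
    (((h.mul (isBigO_refl log _)).trans_isLittleO hsmall).congr' hone .rfl)

theorem not_exists_rpow_bound_inv_log {α : ℝ} (hα : 0 < α) (C : ℝ) :
    ¬ ∃ δ > (0 : ℝ), ∀ x : ℝ, |x| ≤ δ → |(log x)⁻¹| ≤ C * |x| ^ α := by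
  rintro ⟨δ, hδ, hbound⟩
  refine not_isBigO_inv_log_rpow hα (IsBigO.of_bound C ?_)
  filter_upwards [Ioo_mem_nhdsGT hδ] with x hx
  simpa [abs_of_pos hx.1, abs_of_pos (rpow_pos_of_pos hx.1 α)] using
    hbound x ((abs_of_pos hx.1).trans_le hx.2.le)

/-- On `[-1/2, 1/2]`, with `f x = xⁿ` and `φ x = xⁿ / log |x|` (and `φ 0 = 0`):
`φ` is `Cⁿ`, `ψ x = 1 / log |x|` (with `ψ 0 = 0`) is the unique continuous solution of
`φ = ψ · f`, `ψ` is not Hölder at `0` for any positive exponent, and there is no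
Hölder continuous solution of `φ = ψ' · f` on `[-1/2, 1/2]`. -/
theorem statement15 (n : ℕ) (ψ φ : ℝ → ℝ)
    (hψdef : ∀ x : ℝ, ψ x = if x = 0 then 0 else 1 / Real.log |x|)
    (hφdef : ∀ x : ℝ, φ x = x ^ n * ψ x) :
    ContDiffOn ℝ n φ (Icc (-(1/2) : ℝ) (1/2)) ∧
    ContinuousOn ψ (Icc (-(1/2) : ℝ) (1/2)) ∧
    (∀ x ∈ Icc (-(1/2) : ℝ) (1/2), φ x = ψ x * x ^ n) ∧
    (∀ ψ' : ℝ → ℝ, ContinuousOn ψ' (Icc (-(1/2) : ℝ) (1/2)) →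
      (∀ x ∈ Icc (-(1/2) : ℝ) (1/2), φ x = ψ' x * x ^ n) →
      ∀ x ∈ Icc (-(1/2) : ℝ) (1/2), ψ' x = ψ x) ∧
    (∀ α : ℝ, 0 < α → ∀ C : ℝ, ¬ ∃ δ > (0 : ℝ), ∀ x : ℝ, |x| ≤ δ →
      |ψ x - ψ 0| ≤ C * |x| ^ α) ∧
    (¬ ∃ (ψ' : ℝ → ℝ) (C α : NNReal), 0 < α ∧
        HolderOnWith C α ψ' (Icc (-(1/2) : ℝ) (1/2)) ∧
        ∀ x ∈ Icc (-(1/2) : ℝ) (1/2), φ x = ψ' x * x ^ n) := by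
  have hψ : ψ = fun x => (log x)⁻¹ :=
    funext fun x => by by_cases hx : x = 0 <;> simp [hψdef, hx]
  have hφ : φ = fun x => x ^ n * (log x)⁻¹ ^ 1 := funext fun x => by simp [hφdef, hψ]
  subst hψ hφ
  have hI : Icc (-(1/2) : ℝ) (1/2) ⊆ Ioo (-1) 1 := Icc_subset_Ioo (by norm_num) (by norm_num)
  have hcont := continuousOn_inv_log.mono hI
  have huniq (ψ' : ℝ → ℝ) (hψ' : ContinuousOn ψ' (Icc (-(1/2) : ℝ) (1/2)))
      (h : ∀ x ∈ Icc (-(1/2) : ℝ) (1/2), x ^ n * (log x)⁻¹ ^ 1 = ψ' x * x ^ n) :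
      EqOn ψ' (fun x => (log x)⁻¹) (Icc (-(1/2) : ℝ) (1/2)) :=
    eqOn_of_mul_pow_eqOn n hψ' hcont (Icc_subset_closure_diff_singleton_zero (by norm_num))
      fun x hx => (h x hx).symm.trans (by ring)
  have hbound (α : ℝ) (hα : 0 < α) (C : ℝ) :
      ¬ ∃ δ > (0 : ℝ), ∀ x : ℝ, |x| ≤ δ → |(log x)⁻¹ - (log 0)⁻¹| ≤ C * |x| ^ α := by
    simpa using not_exists_rpow_bound_inv_log hα C
  refine ⟨(contDiffOn_pow_mul_inv_log_pow n one_ne_zero).mono hI, hcont, fun x _ => by ring,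
    huniq, hbound, ?_⟩
  rintro ⟨ψ', C, α, hα, hHolder, h⟩
  have heq := huniq ψ' (hHolder.continuousOn hα) h
  have h0 : (0 : ℝ) ∈ Icc (-(1/2)) (1/2) := by norm_num
  refine hbound α hα C ⟨1/2, by norm_num, fun x hx => ?_⟩
  have hx : x ∈ Icc (-(1/2) : ℝ) (1/2) := abs_le.mp hx
  simpa [heq hx, heq h0, Real.dist_eq] using hHolder.dist_le hx h0
end
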